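/- arXiv:2403.18544 — 7 statements merged into one kernel-verified Lean document; each statement's English description precedes it below -/
import Mathlib

section
/- Let n > 0 be a real number, let d ≥ 1, and let ν be a Borel measure on ℝ^d that is homogeneous of degree n and finite on compact sets. Let φ : ℝ^d → ℝ be continuous, positively homogeneous of degree 1, and satisfy φ(x) > 0 for every x ≠ 0. Then B(φ) := ν({x ∈ ℝ^d : φ(x) ≤ 1}) is finite, and the pushforward of ν under φ equals the measure on ℝ with density t ↦ B(φ)·n·t^{n−1} on (0,∞) (and density 0 elsewhere) with respect to Lebesgue measure; that is, for every Borel set A ⊆ ℝ, ν(φ⁻¹(A)) = B(φ)·∫_{A ∩ (0,∞)} n·t^{n−1} dt. -/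
open MeasureTheory Set
open scoped Pointwise ENNReal

/-- Let `n > 0`, `d ≥ 1`, and let `ν` be a Borel measure on `ℝ^d`
homogeneous of degree `n` and finite on compact sets.  Let `φ : ℝ^d → ℝ` be continuous,
positively homogeneous of degree 1, with `φ x > 0` for `x ≠ 0`.  Then
`B(φ) := ν {x | φ x ≤ 1}` is finite and the pushforward of `ν` under `φ` has density
`t ↦ B(φ) · n · t^(n-1)` on `(0,∞)` with respect to Lebesgue measure. -/
theorem stmt0 (d : ℕ) (hd : 1 ≤ d) (n : ℝ) (hn : 0 < n)
    (ν : Measure (Fin d → ℝ))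
    (hhom : ∀ t : ℝ, 0 < t → ∀ A : Set (Fin d → ℝ), MeasurableSet A →
      ν (t • A) = ENNReal.ofReal (t ^ n) * ν A)
    (hfin : ∀ K : Set (Fin d → ℝ), IsCompact K → ν K < ⊤)
    (φ : (Fin d → ℝ) → ℝ) (hφc : Continuous φ)
    (hφh : ∀ t : ℝ, 0 ≤ t → ∀ x : Fin d → ℝ, φ (t • x) = t * φ x)
    (hφp : ∀ x : Fin d → ℝ, x ≠ 0 → 0 < φ x) :
    ν {x | φ x ≤ 1} ≠ ⊤ ∧
      ∀ A : Set ℝ, MeasurableSet A →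
        ν (φ ⁻¹' A) =
          ν {x | φ x ≤ 1} *
            ∫⁻ t in A ∩ Set.Ioi (0 : ℝ), ENNReal.ofReal (n * t ^ (n - 1)) := by
  have hφm : Measurable φ := hφc.measurable
  have hφ0 : φ 0 = 0 := by
    have := hφh 0 le_rfl 0
    simpa using this
  -- sublevel sets at level ≤ 0 are contained in {0}
  have hsub0 : ∀ s : ℝ, s ≤ 0 → {x : Fin d → ℝ | φ x ≤ s} ⊆ {0} := by
    intro s hs x hx
    by_contra hx0
    exact absurd (le_trans hx hs) (not_le.2 (hφp x (by simpa using hx0)))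
  -- ν {0} = 0
  have hν0 : ν ({0} : Set (Fin d → ℝ)) = 0 := by
    have hm : MeasurableSet ({0} : Set (Fin d → ℝ)) := measurableSet_singleton 0
    have h2 : (2:ℝ) • ({0} : Set (Fin d → ℝ)) = {0} := by
      rw [smul_set_singleton, smul_zero]
    have heq := hhom 2 (by norm_num) {0} hm
    rw [h2] at heq
    have hlt : ν ({0} : Set (Fin d → ℝ)) < ⊤ := hfin _ isCompact_singleton
    by_contra h0
    have h1 : (1:ℝ≥0∞) < ENNReal.ofReal (2 ^ n) := by
      rw [show (1:ℝ≥0∞) = ENNReal.ofReal 1 by simp]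
      exact (ENNReal.ofReal_lt_ofReal_iff_of_nonneg (by norm_num)).2
        ((Real.one_lt_rpow_iff_of_pos (by norm_num)).2 (Or.inl ⟨by norm_num, hn⟩))
    have : ν ({0} : Set (Fin d → ℝ)) < ENNReal.ofReal (2 ^ n) * ν ({0} : Set (Fin d → ℝ)) := by
      calc ν ({0} : Set (Fin d → ℝ)) = 1 * ν ({0} : Set (Fin d → ℝ)) := (one_mul _).symm
      _ < _ := by
        rw [mul_comm 1, mul_comm (ENNReal.ofReal _)]
        exact ENNReal.mul_lt_mul_right h0 hlt.ne h1
    rw [← heq] at this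
    exact lt_irrefl _ this
  -- lower bound via compact sphere
  have hnt : Nontrivial (Fin d → ℝ) := by
    refine ⟨⟨(fun _ => (1:ℝ)), 0, fun h => ?_⟩⟩
    have := congrFun h ⟨0, hd⟩
    norm_num at this
  obtain ⟨x₀, hx₀S, hx₀min⟩ := (isCompact_sphere (0 : Fin d → ℝ) 1).exists_isMinOn
    (NormedSpace.sphere_nonempty.2 zero_le_one) hφc.continuousOn
  have hx₀ : ‖x₀‖ = 1 := mem_sphere_zero_iff_norm.1 hx₀S
  set m := φ x₀ with hmdef
  have hm0 : 0 < m := hφp x₀ (by intro h; rw [h] at hx₀; simp at hx₀)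
  have hlow : ∀ x, m * ‖x‖ ≤ φ x := by
    intro x
    rcases eq_or_ne x 0 with rfl | hx
    · simp [hφ0]
    · have hnx : 0 < ‖x‖ := norm_pos_iff.2 hx
      have hmem : ‖x‖⁻¹ • x ∈ Metric.sphere (0 : Fin d → ℝ) 1 := by
        rw [mem_sphere_zero_iff_norm, norm_smul, norm_inv, norm_norm,
          inv_mul_cancel₀ hnx.ne']
      have h1 := hx₀min hmem
      have h2 : φ x = ‖x‖ * φ (‖x‖⁻¹ • x) := by
        rw [← hφh ‖x‖ hnx.le, smul_inv_smul₀ hnx.ne']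
      rw [h2, mul_comm m]
      exact mul_le_mul_of_nonneg_left h1 hnx.le
  have hcpt : IsCompact {x : Fin d → ℝ | φ x ≤ 1} := by
    refine (isCompact_closedBall (0 : Fin d → ℝ) m⁻¹).of_isClosed_subset
      (isClosed_le hφc continuous_const) ?_
    intro x hx
    rw [Metric.mem_closedBall, dist_zero_right]
    have h1 : m * ‖x‖ ≤ 1 := le_trans (hlow x) hx
    calc ‖x‖ = m⁻¹ * (m * ‖x‖) := by field_simp
    _ ≤ m⁻¹ * 1 := by gcongr
    _ = m⁻¹ := mul_one _
  have hBfin : ν {x : Fin d → ℝ | φ x ≤ 1} ≠ ⊤ := (hfin _ hcpt).ne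
  have hmeas : ∀ s : ℝ, MeasurableSet {x : Fin d → ℝ | φ x ≤ s} :=
    fun s => measurableSet_le hφm measurable_const
  -- value of sublevel sets
  have hIic : ∀ s : ℝ, 0 < s →
      ν {x : Fin d → ℝ | φ x ≤ s} = ENNReal.ofReal (s ^ n) * ν {x | φ x ≤ 1} := by
    intro s hs
    have hset : {x : Fin d → ℝ | φ x ≤ s} = s • {x : Fin d → ℝ | φ x ≤ 1} := by
      ext x
      rw [mem_smul_set_iff_inv_smul_mem₀ hs.ne']
      simp only [mem_setOf_eq, hφh s⁻¹ (inv_nonneg.2 hs.le)]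
      rw [inv_mul_le_iff₀ hs, mul_one]
    rw [hset, hhom s hs _ (hmeas 1)]
  have hval : ∀ s : ℝ, ν {x : Fin d → ℝ | φ x ≤ s}
      = ENNReal.ofReal ((s ⊔ 0) ^ n) * ν {x | φ x ≤ 1} := by
    intro s
    rcases le_or_gt s 0 with hs | hs
    · rw [measure_mono_null (hsub0 s hs) hν0, sup_eq_right.2 hs, Real.zero_rpow hn.ne',
        ENNReal.ofReal_zero, zero_mul]
    · rw [hIic s hs, sup_eq_left.2 hs.le]
  have hvfin : ∀ s : ℝ, ν {x : Fin d → ℝ | φ x ≤ s} ≠ ⊤ := by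
    intro s
    rw [hval]
    exact (ENNReal.mul_lt_top ENNReal.ofReal_lt_top (hfin _ hcpt)).ne
  -- the key integral computation
  have key : ∀ a b : ℝ, 0 ≤ a → a ≤ b →
      ∫⁻ t in Ioc a b, ENNReal.ofReal (n * t ^ (n-1)) = ENNReal.ofReal (b ^ n - a ^ n) := by
    intro a b ha hab
    have hint : IntegrableOn (fun t : ℝ => n * t ^ (n-1)) (Ioc a b) := by
      exact ((intervalIntegral.intervalIntegrable_rpow' (by linarith)).1).const_mul n
    have hnn : ∀ t ∈ Ioc a b, 0 ≤ n * t ^ (n-1) := fun t ht =>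
      mul_nonneg hn.le (Real.rpow_nonneg (le_trans ha ht.1.le) _)
    rw [← MeasureTheory.ofReal_integral_eq_lintegral_ofReal hint
      ((ae_restrict_iff' measurableSet_Ioc).2 (Filter.Eventually.of_forall hnn))]
    congr 1
    rw [← intervalIntegral.integral_of_le hab, intervalIntegral.integral_const_mul,
      integral_rpow (Or.inl (by linarith)),
      show n - 1 + 1 = n by ring, mul_comm n, div_mul_cancel₀ _ hn.ne']
  set f : ℝ → ℝ≥0∞ := fun t => ENNReal.ofReal (n * t ^ (n-1)) with hf
  -- equality of pushforward with density measure
  have hmapeq : ν.map φ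
      = ν {x | φ x ≤ 1} • ((volume.restrict (Ioi (0:ℝ))).withDensity f) := by
    refine Measure.ext_of_Ioc' _ _ ?_ ?_
    · intro a b hab
      rw [Measure.map_apply hφm measurableSet_Ioc]
      have hsub : φ ⁻¹' Ioc a b ⊆ {x : Fin d → ℝ | φ x ≤ b} := fun x hx => hx.2
      exact (lt_of_le_of_lt (measure_mono hsub) (lt_top_iff_ne_top.2 (hvfin b))).ne
    · intro a b hab
      rw [Measure.map_apply hφm measurableSet_Ioc, Measure.smul_apply, smul_eq_mul,
        withDensity_apply _ measurableSet_Ioc, Measure.restrict_restrict measurableSet_Ioc,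
        Ioc_inter_Ioi]
      have hpre : φ ⁻¹' Ioc a b
          = {x : Fin d → ℝ | φ x ≤ b} \ {x : Fin d → ℝ | φ x ≤ a} := by
        ext x
        simp only [mem_preimage, mem_Ioc, mem_diff, mem_setOf_eq, not_le]
        tauto
      rcases le_or_gt b 0 with hb | hb
      · have h1 : ν (φ ⁻¹' Ioc a b) = 0 :=
          measure_mono_null (fun x hx => hsub0 b hb hx.2) hν0
        have h2 : Ioc (a ⊔ 0) b = (∅ : Set ℝ) :=
          Ioc_eq_empty (not_lt.2 (le_trans hb le_sup_right))
        rw [h1, h2]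
        simp
      · have hm0b : a ⊔ 0 ≤ b := sup_le hab.le hb.le
        have hd2 : ν ({x : Fin d → ℝ | φ x ≤ b} \ {x : Fin d → ℝ | φ x ≤ a})
            = ν {x : Fin d → ℝ | φ x ≤ b} - ν {x : Fin d → ℝ | φ x ≤ a} :=
          measure_diff (fun x (hx : φ x ≤ a) => le_trans hx hab.le)
            (hmeas a).nullMeasurableSet (hvfin a)
        rw [key (a ⊔ 0) b le_sup_right hm0b, hpre, hd2, hval b, hval a, sup_eq_left.2 hb.le,
          ENNReal.ofReal_sub _ (Real.rpow_nonneg le_sup_right _),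
          ENNReal.mul_sub (fun _ _ => hBfin), mul_comm (ν {x | φ x ≤ 1}),
          mul_comm (ν {x | φ x ≤ 1})]
  refine ⟨hBfin, fun A hA => ?_⟩
  rw [← Measure.map_apply hφm hA, hmapeq, Measure.smul_apply, smul_eq_mul,
    withDensity_apply _ hA, Measure.restrict_restrict hA]
end

section
/- Let n > 0 be a real number, let k ≥ 1, and let ν be a Borel measure on ℝ^k that is homogeneous of degree n, finite on compact sets, and vanishes outside the closed nonnegative orthant {x ∈ ℝ^k : x_i ≥ 0 for all i}. Write N(x) = x_1 + … + x_k, and let q be the pushforward under the map x ↦ N(x)⁻¹·x of the restriction of ν to {x : 0 < N(x) ≤ 1} (a Borel measure concentrated on Δ_k). Then: (i) q(U) = ν(cone(U) ∖ {0}) for every Borel set U ⊆ Δ_k; and (ii) ν({0}) = 0 and the pushforward of ν under the polar map x ↦ (N(x)⁻¹·x, N(x)) (defined for x with N(x) > 0; ν is concentrated on {N > 0}) equals the product measure q ⊗ ρ_n on ℝ^k × ℝ, where ρ_n is the measure on ℝ with density t ↦ n·t^{n−1} on (0,∞) (and 0 elsewhere) with respect to Lebesgue measure. -/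
/-!
By homogeneity the truncated cone `{x | (N x)⁻¹ • x ∈ s, 0 < N x ≤ t}` is `t •` the one of
height `1`, so its mass is `t ^ n * q s`. Hence, for each Borel `s`, the image under `N` of `ν`
restricted to the cone over `s` is `q s • ρ_n`: both measures on `ℝ` vanish on `(-∞, 0]` and agree
on every `(0, t]`. This is the product formula on rectangles. The atom at `0` is fixed by scaling,
so `ν {0} = 2 ^ n * ν {0}`, which is finite only if it vanishes.
-/

open MeasureTheory Set
open scoped Pointwise ENNReal

namespace MeasureTheory

def Measure.IsHomogeneous {E : Type*} [MeasurableSpace E] [SMul ℝ E] (ν : Measure E) (n : ℝ) :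
    Prop :=
  ∀ t : ℝ, 0 < t → ∀ A : Set E, MeasurableSet A → ν (t • A) = ENNReal.ofReal (t ^ n) * ν A

lemma Measure.IsHomogeneous.measure_singleton_zero {E : Type*} [AddCommGroup E] [Module ℝ E]
    [MeasurableSpace E] [MeasurableSingletonClass E] {ν : Measure E} {n : ℝ}
    (hν : ν.IsHomogeneous n) (hn : 0 < n) (h0 : ν {0} ≠ ∞) : ν {0} = 0 := by
  by_contra hne
  have h2 : ENNReal.ofReal (2 ^ n) * ν {0} = ν {0} := by
    simpa [smul_set_singleton] using (hν 2 two_pos {0} (measurableSet_singleton 0)).symm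
  have : (2 : ℝ) ^ n = 1 := by simpa using (ENNReal.mul_eq_right hne h0).mp h2
  exact (Real.one_lt_rpow one_lt_two hn).ne' this

section RadialMeasure

noncomputable def radialMeasure (n : ℝ) : Measure ℝ :=
  volume.withDensity fun t => if 0 < t then ENNReal.ofReal (n * t ^ (n - 1)) else 0

instance (n : ℝ) : SigmaFinite (radialMeasure n) :=
  SigmaFinite.withDensity_of_ne_top' fun t => by split_ifs <;> simp

lemma radialMeasure_Iic_zero (n : ℝ) : radialMeasure n (Iic 0) = 0 := by
  rw [radialMeasure, withDensity_apply _ measurableSet_Iic,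
    setLIntegral_congr_fun measurableSet_Iic fun t ht => if_neg (not_lt.2 ht), lintegral_zero]

lemma radialMeasure_Ioc_zero {n : ℝ} (hn : 0 < n) {b : ℝ} (hb : 0 ≤ b) :
    radialMeasure n (Ioc 0 b) = ENNReal.ofReal (b ^ n) := by
  have hint : IntegrableOn (fun t : ℝ => n * t ^ (n - 1)) (Ioc 0 b) :=
    ((intervalIntegral.intervalIntegrable_rpow' (by linarith)).const_mul n).1
  have hnonneg : 0 ≤ᵐ[volume.restrict (Ioc 0 b)] fun t : ℝ => n * t ^ (n - 1) :=
    (ae_restrict_iff' measurableSet_Ioc).2 <| ae_of_all _ fun t ht =>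
      mul_nonneg hn.le (Real.rpow_nonneg ht.1.le _)
  rw [radialMeasure, withDensity_apply _ measurableSet_Ioc,
    setLIntegral_congr_fun measurableSet_Ioc fun t ht => if_pos ht.1,
    ← ofReal_integral_eq_lintegral_ofReal hint hnonneg, ← intervalIntegral.integral_of_le hb,
    intervalIntegral.integral_const_mul, integral_rpow (Or.inl (by linarith)), sub_add_cancel,
    Real.zero_rpow hn.ne', sub_zero, mul_div_cancel₀ _ hn.ne']

lemma measure_Ioc_eq_sub_of_Iic_null {μ : Measure ℝ} (hμ : μ (Iic 0) = 0) {a b : ℝ}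
    (hab : a ≤ b) (ha : μ (Ioc 0 a) ≠ ∞) : μ (Ioc a b) = μ (Ioc 0 b) - μ (Ioc 0 a) := by
  have hIoc : Ioc a b ∩ Ioi 0 = Ioc 0 b \ Ioc 0 a := by
    ext x
    simp only [mem_inter_iff, mem_Ioc, mem_Ioi, mem_sdiff]
    grind
  rw [← measure_inter_conull (t := Ioi 0) (by rwa [compl_Ioi]), hIoc,
    measure_sdiff (Ioc_subset_Ioc_right hab) measurableSet_Ioc.nullMeasurableSet ha]

lemma Measure.ext_of_Ioc_zero {μ ν : Measure ℝ} (hμ : μ (Iic 0) = 0) (hν : ν (Iic 0) = 0)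
    (hfin : ∀ b, 0 ≤ b → μ (Ioc 0 b) ≠ ∞) (h : ∀ b, 0 ≤ b → μ (Ioc 0 b) = ν (Ioc 0 b)) :
    μ = ν := by
  have h' : ∀ b, μ (Ioc 0 b) = ν (Ioc 0 b) ∧ μ (Ioc 0 b) ≠ ∞ := fun b =>
    (le_total 0 b).elim (fun hb => ⟨h b hb, hfin b hb⟩)
      (fun hb => by simp [Ioc_eq_empty_of_le hb])
  refine ext_of_Ioc' μ ν (fun a b hab => ?_) (fun a b hab => ?_)
  · rw [measure_Ioc_eq_sub_of_Iic_null hμ hab.le (h' a).2]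
    exact (tsub_le_self.trans_lt (h' b).2.lt_top).ne
  · rw [measure_Ioc_eq_sub_of_Iic_null hμ hab.le (h' a).2,
      measure_Ioc_eq_sub_of_Iic_null hν hab.le ((h' a).1 ▸ (h' a).2), (h' a).1, (h' b).1]

end RadialMeasure

section Polar

variable {E : Type*} [AddCommGroup E] [Module ℝ E] {N : E → ℝ}

noncomputable def radialProj (N : E → ℝ) (x : E) : E := (N x)⁻¹ • x

def truncatedCone (N : E → ℝ) (s : Set E) (t : ℝ) : Set E :=
  radialProj N ⁻¹' s ∩ N ⁻¹' Ioc 0 t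

lemma radialProj_smul (hN : ∀ t : ℝ, 0 < t → ∀ x, N (t • x) = t * N x) {t : ℝ} (ht : 0 < t)
    (x : E) : radialProj N (t • x) = radialProj N x := by
  rw [radialProj, radialProj, hN t ht, smul_smul, mul_inv_rev, mul_assoc, inv_mul_cancel₀ ht.ne',
    mul_one]

lemma smul_truncatedCone (hN : ∀ t : ℝ, 0 < t → ∀ x, N (t • x) = t * N x) {t : ℝ} (ht : 0 < t)
    (s : Set E) : t • truncatedCone N s 1 = truncatedCone N s t := by
  ext y
  have ht' : 0 < t⁻¹ := inv_pos.2 ht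
  rw [mem_smul_set_iff_inv_smul_mem₀ ht.ne']
  simp only [truncatedCone, mem_inter_iff, mem_preimage, mem_Ioc, radialProj_smul hN ht',
    hN _ ht', mul_pos_iff_of_pos_left ht', inv_mul_le_iff₀ ht, mul_one]

lemma truncatedCone_one_eq_cone_diff (hN : ∀ t : ℝ, 0 < t → ∀ x, N (t • x) = t * N x)
    {U : Set E} (hU : ∀ u ∈ U, N u = 1) :
    truncatedCone N U 1 = {y | ∃ t ∈ Icc (0 : ℝ) 1, ∃ u ∈ U, y = t • u} \ {0} := by
  have hN0 : N 0 = 0 := by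
    have h := hN 2 two_pos 0
    rw [smul_zero] at h
    linarith
  ext x
  constructor
  · rintro ⟨hxU, hx0, hx1⟩
    refine ⟨⟨N x, ⟨hx0.le, hx1⟩, radialProj N x, hxU, (smul_inv_smul₀ hx0.ne' x).symm⟩, ?_⟩
    rintro rfl
    exact hx0.ne' hN0
  · rintro ⟨⟨t, ⟨ht0, ht1⟩, u, hu, rfl⟩, hne⟩
    have ht : 0 < t := ht0.lt_of_ne (by rintro rfl; exact hne (zero_smul ℝ u))
    refine ⟨?_, ?_⟩
    · rwa [mem_preimage, radialProj_smul hN ht, radialProj, hU u hu, inv_one, one_smul]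
    · rw [mem_preimage, hN t ht, hU u hu, mul_one]
      exact ⟨ht, ht1⟩

variable [MeasurableSpace E] [MeasurableSMul₂ ℝ E] {ν : Measure E} {n : ℝ}

lemma measurable_radialProj (hNm : Measurable N) : Measurable (radialProj N) :=
  hNm.inv.smul measurable_id

lemma measurableSet_truncatedCone (hNm : Measurable N) {s : Set E} (hs : MeasurableSet s)
    (t : ℝ) : MeasurableSet (truncatedCone N s t) :=
  (measurable_radialProj hNm hs).inter (hNm measurableSet_Ioc)

lemma map_restrict_radialProj_apply (hNm : Measurable N) {s : Set E} (hs : MeasurableSet s) :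
    (ν.restrict (N ⁻¹' Ioc 0 1)).map (radialProj N) s = ν (truncatedCone N s 1) := by
  rw [Measure.map_apply (measurable_radialProj hNm) hs,
    Measure.restrict_apply (measurable_radialProj hNm hs)]
  rfl

lemma Measure.IsHomogeneous.measure_truncatedCone (hν : ν.IsHomogeneous n) (hn : 0 < n)
    (hN : ∀ t : ℝ, 0 < t → ∀ x, N (t • x) = t * N x) (hNm : Measurable N) {s : Set E}
    (hs : MeasurableSet s) {t : ℝ} (ht : 0 ≤ t) :
    ν (truncatedCone N s t) = ENNReal.ofReal (t ^ n) * ν (truncatedCone N s 1) := by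
  rcases ht.eq_or_lt with rfl | ht
  · simp [truncatedCone, Real.zero_rpow hn.ne']
  · rw [← smul_truncatedCone hN ht, hν t ht _ (measurableSet_truncatedCone hNm hs 1)]

theorem Measure.IsHomogeneous.map_restrict_preimage_radialProj (hν : ν.IsHomogeneous n)
    (hn : 0 < n) (hN : ∀ t : ℝ, 0 < t → ∀ x, N (t • x) = t * N x) (hNm : Measurable N)
    (hneg : ν (N ⁻¹' Iic 0) = 0) {s : Set E} (hs : MeasurableSet s)
    (hfin : ν (truncatedCone N s 1) ≠ ∞) :
    (ν.restrict (radialProj N ⁻¹' s)).map N = ν (truncatedCone N s 1) • radialMeasure n := by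
  have hmap : ∀ I, MeasurableSet I →
      (ν.restrict (radialProj N ⁻¹' s)).map N I = ν (radialProj N ⁻¹' s ∩ N ⁻¹' I) :=
    fun I hI => by rw [Measure.map_apply hNm hI, Measure.restrict_apply (hNm hI), inter_comm]
  refine Measure.ext_of_Ioc_zero ?_ ?_ (fun b hb => ?_) (fun b hb => ?_)
  · rw [hmap _ measurableSet_Iic]
    exact measure_mono_null inter_subset_right hneg
  · rw [Measure.smul_apply, radialMeasure_Iic_zero, smul_zero]
  · rw [hmap _ measurableSet_Ioc]
    exact (hν.measure_truncatedCone hn hN hNm hs hb).trans_ne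
      (ENNReal.mul_ne_top ENNReal.ofReal_ne_top hfin)
  · rw [hmap _ measurableSet_Ioc, Measure.smul_apply, radialMeasure_Ioc_zero hn hb, smul_eq_mul,
      mul_comm]
    exact hν.measure_truncatedCone hn hN hNm hs hb

theorem Measure.IsHomogeneous.map_polar_eq_prod (hν : ν.IsHomogeneous n) (hn : 0 < n)
    (hN : ∀ t : ℝ, 0 < t → ∀ x, N (t • x) = t * N x) (hNm : Measurable N)
    (hneg : ν (N ⁻¹' Iic 0) = 0) (hfin : ν (N ⁻¹' Ioc 0 1) ≠ ∞) :
    ν.map (fun x => (radialProj N x, N x)) =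
      ((ν.restrict (N ⁻¹' Ioc 0 1)).map (radialProj N)).prod (radialMeasure n) := by
  have : IsFiniteMeasure (ν.restrict (N ⁻¹' Ioc 0 1)) := isFiniteMeasure_restrict.2 hfin
  refine (Measure.prod_eq fun s t hs ht => ?_).symm
  have hfin_s : ν (truncatedCone N s 1) ≠ ∞ :=
    ne_top_of_le_ne_top hfin (measure_mono inter_subset_right)
  calc ν.map (fun x => (radialProj N x, N x)) (s ×ˢ t)
      = (ν.restrict (radialProj N ⁻¹' s)).map N t := by
        rw [Measure.map_apply ((measurable_radialProj hNm).prodMk hNm) (hs.prod ht),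
          mk_preimage_prod, Measure.map_apply hNm ht, Measure.restrict_apply (hNm ht), inter_comm]
    _ = _ := by
        rw [hν.map_restrict_preimage_radialProj hn hN hNm hneg hs hfin_s, Measure.smul_apply,
          smul_eq_mul, map_restrict_radialProj_apply hNm hs]

end Polar

section Orthant

variable {ι : Type*} [Fintype ι] {ν : Measure (ι → ℝ)}

lemma isCompact_nonneg_sum_le (t : ℝ) : IsCompact {x : ι → ℝ | (∀ i, 0 ≤ x i) ∧ ∑ i, x i ≤ t} := by
  refine (isCompact_univ_pi fun _ => isCompact_Icc (a := 0) (b := t)).of_isClosed_subset ?_ ?_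
  · exact (isClosed_le continuous_const continuous_id).inter
      (isClosed_le (continuous_finsetSum _ fun i _ => continuous_apply i) continuous_const)
  · exact fun x hx i _ => ⟨hx.1 i, (Finset.single_le_sum (fun j _ => hx.1 j)
      (Finset.mem_univ i)).trans hx.2⟩

lemma measure_sum_le_ne_top (hfin : ∀ K : Set (ι → ℝ), IsCompact K → ν K < ⊤)
    (horth : ν {x | ¬ ∀ i, 0 ≤ x i} = 0) (t : ℝ) : ν {x | ∑ i, x i ≤ t} ≠ ∞ :=
  ((measure_mono_ae ((ae_iff.2 horth).mono fun _ hx hxt => ⟨hx, hxt⟩)).trans_lt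
    (hfin _ (isCompact_nonneg_sum_le t))).ne

lemma measure_sum_nonpos (hzero : ν {0} = 0) (horth : ν {x | ¬ ∀ i, 0 ≤ x i} = 0) :
    ν {x | ∑ i, x i ≤ 0} = 0 :=
  measure_mono_null_ae ((ae_iff.2 horth).mono fun _ hx hx0 => funext fun i =>
    (Finset.sum_eq_zero_iff_of_nonneg fun i _ => hx i).1
      (le_antisymm hx0 (Finset.sum_nonneg fun i _ => hx i)) i (Finset.mem_univ i)) hzero

end Orthant

end MeasureTheory

theorem stmt2_general (k : ℕ) (n : ℝ) (hn : 0 < n)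
    (ν : Measure (Fin k → ℝ))
    (hhom : ∀ t : ℝ, 0 < t → ∀ A : Set (Fin k → ℝ), MeasurableSet A →
      ν (t • A) = ENNReal.ofReal (t ^ n) * ν A)
    (hfin : ∀ K : Set (Fin k → ℝ), IsCompact K → ν K < ⊤)
    (horth : ν {x : Fin k → ℝ | ¬ ∀ i, 0 ≤ x i} = 0)
    (q : Measure (Fin k → ℝ))
    (hq : q = Measure.map (fun x : Fin k → ℝ => (∑ i, x i)⁻¹ • x)
        (ν.restrict {x : Fin k → ℝ | 0 < ∑ i, x i ∧ ∑ i, x i ≤ 1})) :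
    (∀ U : Set (Fin k → ℝ), MeasurableSet U → U ⊆ stdSimplex ℝ (Fin k) →
        q U = ν ({y : Fin k → ℝ | ∃ t ∈ Set.Icc (0 : ℝ) 1, ∃ u ∈ U, y = t • u} \ {0})) ∧
      ν {(0 : Fin k → ℝ)} = 0 ∧
        Measure.map (fun x : Fin k → ℝ => ((∑ i, x i)⁻¹ • x, ∑ i, x i)) ν =
          q.prod (volume.withDensity
            (fun t : ℝ => if 0 < t then ENNReal.ofReal (n * t ^ (n - 1)) else 0)) := by
  set N : (Fin k → ℝ) → ℝ := fun x => ∑ i, x i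
  have hν : ν.IsHomogeneous n := hhom
  have hN : ∀ t : ℝ, 0 < t → ∀ x, N (t • x) = t * N x := fun t _ x => by
    simp [N, Finset.mul_sum]
  have hNm : Measurable N := Finset.measurable_sum _ fun i _ => measurable_pi_apply i
  have hq' : q = (ν.restrict (N ⁻¹' Ioc 0 1)).map (radialProj N) := hq
  have hzero : ν {0} = 0 := hν.measure_singleton_zero hn (hfin _ isCompact_singleton).ne
  refine ⟨fun U hU hUΔ => ?_, hzero, ?_⟩
  · rw [hq', map_restrict_radialProj_apply hNm hU,
      truncatedCone_one_eq_cone_diff hN fun u hu => (hUΔ hu).2]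
  · rw [hq']
    exact hν.map_polar_eq_prod hn hN hNm (measure_sum_nonpos hzero horth)
      (ne_top_of_le_ne_top (measure_sum_le_ne_top hfin horth 1) (measure_mono fun x hx => hx.2))

/-- Let `n > 0`, `k ≥ 1`, and let `ν` be a Borel measure on `ℝ^k`
homogeneous of degree `n`, finite on compact sets, and vanishing outside the closed
nonnegative orthant.  Write `N x = ∑ i, x i` and let `q` be the pushforward under
`x ↦ (N x)⁻¹ • x` of the restriction of `ν` to `{x | 0 < N x ≤ 1}`.  Then:
(i) `q U = ν (cone U \ {0})` for every Borel `U ⊆ Δ_k`; and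
(ii) `ν {0} = 0` and the pushforward of `ν` under the polar map `x ↦ ((N x)⁻¹ • x, N x)`
equals the product measure `q ⊗ ρ_n`, where `ρ_n` has density `t ↦ n·t^(n-1)` on `(0,∞)`. -/
theorem stmt2 (k : ℕ) (hk : 1 ≤ k) (n : ℝ) (hn : 0 < n)
    (ν : Measure (Fin k → ℝ))
    (hhom : ∀ t : ℝ, 0 < t → ∀ A : Set (Fin k → ℝ), MeasurableSet A →
      ν (t • A) = ENNReal.ofReal (t ^ n) * ν A)
    (hfin : ∀ K : Set (Fin k → ℝ), IsCompact K → ν K < ⊤)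
    (horth : ν {x : Fin k → ℝ | ¬ ∀ i, 0 ≤ x i} = 0)
    (q : Measure (Fin k → ℝ))
    (hq : q = Measure.map (fun x : Fin k → ℝ => (∑ i, x i)⁻¹ • x)
        (ν.restrict {x : Fin k → ℝ | 0 < ∑ i, x i ∧ ∑ i, x i ≤ 1})) :
    (∀ U : Set (Fin k → ℝ), MeasurableSet U → U ⊆ stdSimplex ℝ (Fin k) →
        q U = ν ({y : Fin k → ℝ | ∃ t ∈ Set.Icc (0 : ℝ) 1, ∃ u ∈ U, y = t • u} \ {0})) ∧
      ν {(0 : Fin k → ℝ)} = 0 ∧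
        Measure.map (fun x : Fin k → ℝ => ((∑ i, x i)⁻¹ • x, ∑ i, x i)) ν =
          q.prod (volume.withDensity
            (fun t : ℝ => if 0 < t then ENNReal.ofReal (n * t ^ (n - 1)) else 0)) :=
  stmt2_general k n hn ν hhom hfin horth q hq
end

section
/- Let n > 0 be a real number, let k ≥ 1, and let ν and ν′ be Borel measures on ℝ^k, each homogeneous of degree n, finite on compact sets, and vanishing outside the closed nonnegative orthant {x ∈ ℝ^k : x_i ≥ 0 for all i}. If ν(cone(U)) = ν′(cone(U)) for every Borel set U ⊆ Δ_k, then ν = ν′. -/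
open MeasureTheory Set MeasurableSpace
open scoped Pointwise ENNReal

namespace Stmt3Aux

variable {k : ℕ}

noncomputable def r (x : Fin k → ℝ) : ℝ := ∑ i, x i

noncomputable def p (x : Fin k → ℝ) : Fin k → ℝ := (r x)⁻¹ • x

def Q (k : ℕ) : Set (Fin k → ℝ) := {x | ∀ i, 0 ≤ x i}

noncomputable def D (b : ℝ) (U : Set (Fin k → ℝ)) : Set (Fin k → ℝ) :=
  {x | x ∈ Q k ∧ r x ∈ Set.Ioc 0 b ∧ p x ∈ U}

lemma r_zero : r (0 : Fin k → ℝ) = 0 := by simp [r]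

lemma r_nonneg {x : Fin k → ℝ} (hx : x ∈ Q k) : 0 ≤ r x :=
  Finset.sum_nonneg fun i _ => hx i

lemma r_pos {x : Fin k → ℝ} (hx : x ∈ Q k) (h0 : x ≠ 0) : 0 < r x := by
  rcases (r_nonneg hx).lt_or_eq with h | h
  · exact h
  · exfalso; apply h0
    funext i
    have := (Finset.sum_eq_zero_iff_of_nonneg (fun i _ => hx i)).1 h.symm i (Finset.mem_univ i)
    simpa using this

lemma r_smul (t : ℝ) (x : Fin k → ℝ) : r (t • x) = t * r x := by
  simp [r, Finset.mul_sum]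

lemma p_smul {t : ℝ} (ht : t ≠ 0) (x : Fin k → ℝ) : p (t • x) = p x := by
  simp only [p, r_smul, smul_smul, mul_inv_rev]
  congr 1
  rcases eq_or_ne (r x) 0 with h | h
  · simp [h]
  · field_simp

lemma smul_mem_Q {t : ℝ} (ht : 0 ≤ t) {x : Fin k → ℝ} (hx : x ∈ Q k) : t • x ∈ Q k :=
  fun i => mul_nonneg ht (hx i)

lemma p_mem_simplex {x : Fin k → ℝ} (hx : x ∈ Q k) (h : 0 < r x) :
    p x ∈ stdSimplex ℝ (Fin k) := by
  refine ⟨fun i => mul_nonneg (inv_nonneg.2 h.le) (hx i), ?_⟩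
  have : ∑ i, (r x)⁻¹ * x i = (r x)⁻¹ * r x := by rw [r, Finset.mul_sum]
  simpa [p, this] using inv_mul_cancel₀ h.ne'

lemma r_smul_p {x : Fin k → ℝ} (h : r x ≠ 0) : r x • p x = x := by
  rw [p, smul_smul, mul_inv_cancel₀ h, one_smul]

lemma measurable_r : Measurable (r : (Fin k → ℝ) → ℝ) :=
  Finset.measurable_sum _ fun i _ => measurable_pi_apply i

lemma measurable_p : Measurable (p : (Fin k → ℝ) → Fin k → ℝ) :=
  measurable_pi_lambda _ fun i => (measurable_r.inv).mul (measurable_pi_apply i)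

lemma measurableSet_Q : MeasurableSet (Q k) := by
  have : Q k = ⋂ i, {x : Fin k → ℝ | 0 ≤ x i} := by ext x; simp [Q]
  rw [this]
  exact MeasurableSet.iInter fun i => measurableSet_le measurable_const (measurable_pi_apply i)

lemma measurableSet_D {b : ℝ} {U : Set (Fin k → ℝ)} (hU : MeasurableSet U) :
    MeasurableSet (D b U) := by
  have : D b U = (Q k ∩ r ⁻¹' Set.Ioc 0 b) ∩ p ⁻¹' U := by
    ext x; simp [D]; tauto
  rw [this]
  exact (measurableSet_Q.inter (measurable_r measurableSet_Ioc)).inter (measurable_p hU)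

lemma D_eq_smul {b : ℝ} (hb : 0 < b) (U : Set (Fin k → ℝ)) : D b U = b • D 1 U := by
  ext x
  constructor
  · rintro ⟨hxQ, ⟨hr0, hrb⟩, hpU⟩
    refine ⟨b⁻¹ • x, ⟨?_, ⟨?_, ?_⟩, ?_⟩, ?_⟩
    · exact smul_mem_Q (inv_nonneg.2 hb.le) hxQ
    · rw [r_smul]; positivity
    · rw [r_smul]
      calc b⁻¹ * r x ≤ b⁻¹ * b := mul_le_mul_of_nonneg_left hrb (inv_nonneg.2 hb.le)
        _ = 1 := inv_mul_cancel₀ hb.ne'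
    · rw [p_smul (inv_ne_zero hb.ne')]; exact hpU
    · show b • (b⁻¹ • x) = x
      rw [smul_inv_smul₀ hb.ne']
  · rintro ⟨y, ⟨hyQ, ⟨hr0, hr1⟩, hpU⟩, rfl⟩
    refine ⟨smul_mem_Q hb.le hyQ, ⟨?_, ?_⟩, ?_⟩
    · rw [r_smul]; positivity
    · rw [r_smul]
      calc b * r y ≤ b * 1 := mul_le_mul_of_nonneg_left hr1 hb.le
        _ = b := mul_one b
    · rw [p_smul hb.ne']; exact hpU

lemma D_one_subset_coneSet {U : Set (Fin k → ℝ)} :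
    D 1 U ⊆ {y : Fin k → ℝ | ∃ t ∈ Set.Icc (0 : ℝ) 1, ∃ u ∈ U, y = t • u} := by
  rintro x ⟨hxQ, ⟨hr0, hr1⟩, hpU⟩
  exact ⟨r x, ⟨hr0.le, hr1⟩, p x, hpU, (r_smul_p hr0.ne').symm⟩

lemma coneSet_subset {U : Set (Fin k → ℝ)} (hUs : U ⊆ stdSimplex ℝ (Fin k)) :
    {y : Fin k → ℝ | ∃ t ∈ Set.Icc (0 : ℝ) 1, ∃ u ∈ U, y = t • u} ⊆ D 1 U ∪ {0} := by
  rintro x ⟨t, ⟨ht0, ht1⟩, u, huU, rfl⟩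
  rcases eq_or_lt_of_le ht0 with h | h
  · right; simp [← h]
  · left
    obtain ⟨hu1, hu2⟩ := hUs huU
    have hru : r u = 1 := hu2
    refine ⟨smul_mem_Q ht0 (fun i => hu1 i), ⟨?_, ?_⟩, ?_⟩
    · rw [r_smul, hru, mul_one]; exact h
    · rw [r_smul, hru, mul_one]; exact ht1
    · rw [p_smul h.ne']
      have : p u = u := by rw [p, hru, inv_one, one_smul]
      rw [this]; exact huU

def gen (k : ℕ) : Set (Set (Fin k → ℝ)) :=
  {s | (∃ b : ℝ, 0 < b ∧ ∃ U : Set (Fin k → ℝ), MeasurableSet U ∧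
          U ⊆ stdSimplex ℝ (Fin k) ∧ s = D b U)
    ∨ s = {0} ∨ (MeasurableSet s ∧ s ⊆ (Q k)ᶜ)}

lemma D_inter_D {b c : ℝ} {U V : Set (Fin k → ℝ)} :
    D b U ∩ D c V = D (min b c) (U ∩ V) := by
  ext x
  simp only [D, mem_inter_iff, mem_setOf_eq, mem_Ioc, le_min_iff]
  tauto

lemma zero_mem_Q : (0 : Fin k → ℝ) ∈ Q k := fun i => le_refl 0

lemma zero_not_mem_D {b : ℝ} {U : Set (Fin k → ℝ)} : (0 : Fin k → ℝ) ∉ D b U := by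
  rintro ⟨_, ⟨h0, _⟩, _⟩
  rw [r_zero] at h0; exact lt_irrefl 0 h0

lemma isPiSystem_gen : IsPiSystem (gen k) := by
  rintro s hs t ht hne
  rcases hs with ⟨b, hb, U, hU, hUs, rfl⟩ | rfl | ⟨hsm, hssub⟩ <;>
    rcases ht with ⟨c, hc, V, hV, hVs, rfl⟩ | rfl | ⟨htm, htsub⟩
  · exact Or.inl ⟨min b c, lt_min hb hc, U ∩ V, hU.inter hV,
      inter_subset_left.trans hUs, D_inter_D⟩
  · obtain ⟨x, hx1, hx2⟩ := hne
    rw [mem_singleton_iff] at hx2; subst hx2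
    exact absurd hx1 zero_not_mem_D
  · obtain ⟨x, hx1, hx2⟩ := hne
    exact absurd hx1.1 (htsub hx2)
  · obtain ⟨x, hx1, hx2⟩ := hne
    rw [mem_singleton_iff] at hx1; subst hx1
    exact absurd hx2 zero_not_mem_D
  · exact Or.inr (Or.inl (by simp))
  · obtain ⟨x, hx1, hx2⟩ := hne
    rw [mem_singleton_iff] at hx1; subst hx1
    exact absurd zero_mem_Q (htsub hx2)
  · obtain ⟨x, hx1, hx2⟩ := hne
    exact absurd hx2.1 (hssub hx1)
  · obtain ⟨x, hx1, hx2⟩ := hne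
    rw [mem_singleton_iff] at hx2; subst hx2
    exact absurd zero_mem_Q (hssub hx1)
  · exact Or.inr (Or.inr ⟨hsm.inter htm, inter_subset_left.trans hssub⟩)

/-- The σ-algebra generated by `gen k` (not an instance). -/
@[reducible] def m0 (k : ℕ) : MeasurableSpace (Fin k → ℝ) := MeasurableSpace.generateFrom (gen k)

lemma generateFrom_le_inst : m0 k ≤ (inferInstance : MeasurableSpace (Fin k → ℝ)) := by
  apply generateFrom_le
  rintro s (⟨b, hb, U, hU, hUs, rfl⟩ | rfl | ⟨hsm, _⟩)
  · exact measurableSet_D hU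
  · exact measurableSet_singleton 0
  · exact hsm

lemma hQc_m0 : MeasurableSet[m0 k] (Q k)ᶜ :=
  .basic _ (Or.inr (Or.inr ⟨measurableSet_Q.compl, subset_rfl⟩))

lemma h0_m0 : MeasurableSet[m0 k] ({0} : Set (Fin k → ℝ)) := .basic _ (Or.inr (Or.inl rfl))

lemma hQ0_m0 : MeasurableSet[m0 k] (Q k \ {0}) := by
  have : Q k \ {0} = ((Q k)ᶜ ∪ {0})ᶜ := by rw [compl_union, compl_compl]; rfl
  rw [this]
  exact (hQc_m0.union h0_m0).compl

lemma hD_m0 (b : ℝ) (U : Set (Fin k → ℝ)) (hU : MeasurableSet U)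
    (hUs : U ⊆ stdSimplex ℝ (Fin k)) : MeasurableSet[m0 k] (D b U) := by
  rcases le_or_gt b 0 with hb | hb
  · have : D b U = ∅ := by
      ext x
      simp only [D, mem_setOf_eq, mem_Ioc, mem_empty_iff_false, iff_false]
      rintro ⟨_, ⟨h1, h2⟩, _⟩
      exact absurd (h1.trans_le h2) (not_lt.2 hb)
    rw [this]; exact @MeasurableSet.empty _ (m0 k)
  · exact .basic _ (Or.inl ⟨b, hb, U, hU, hUs, rfl⟩)

/-- Auxiliary σ-algebra on `ℝ`. -/
def jR (k : ℕ) : MeasurableSpace ℝ where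
  MeasurableSet' I := MeasurableSet[m0 k] ((Q k \ {0}) ∩ r ⁻¹' I)
  measurableSet_empty := by
    show MeasurableSet[m0 k] ((Q k \ {0}) ∩ r ⁻¹' ∅)
    rw [preimage_empty, inter_empty]; exact @MeasurableSet.empty _ (m0 k)
  measurableSet_compl I hI := by
    show MeasurableSet[m0 k] ((Q k \ {0}) ∩ r ⁻¹' Iᶜ)
    have : (Q k \ {0}) ∩ r ⁻¹' Iᶜ = (Q k \ {0}) \ ((Q k \ {0}) ∩ r ⁻¹' I) := by
      ext x; simp only [mem_inter_iff, mem_preimage, mem_compl_iff, mem_diff]; tauto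
    rw [this]; exact hQ0_m0.diff hI
  measurableSet_iUnion f hf := by
    show MeasurableSet[m0 k] ((Q k \ {0}) ∩ r ⁻¹' ⋃ i, f i)
    rw [preimage_iUnion, inter_iUnion]
    exact .iUnion hf

lemma hr_m0 (I : Set ℝ) (hI : MeasurableSet I) :
    MeasurableSet[m0 k] ((Q k \ {0}) ∩ r ⁻¹' I) := by
  have hle : (inferInstance : MeasurableSpace ℝ) ≤ jR k := by
    rw [(inferInstance : BorelSpace ℝ).measurable_eq, borel_eq_generateFrom_Ioc ℝ]
    apply generateFrom_le
    rintro _ ⟨a, c, hac, rfl⟩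
    show MeasurableSet[m0 k] ((Q k \ {0}) ∩ r ⁻¹' Ioc a c)
    have heq : (Q k \ {0}) ∩ r ⁻¹' Ioc a c
        = D c (stdSimplex ℝ (Fin k)) \ D (max a 0) (stdSimplex ℝ (Fin k)) := by
      ext x
      simp only [mem_inter_iff, mem_diff, mem_preimage, mem_Ioc, mem_singleton_iff, D,
        mem_setOf_eq]
      constructor
      · rintro ⟨⟨hxQ, hx0⟩, hra, hrc⟩
        have hr0 : 0 < r x := r_pos hxQ hx0
        refine ⟨⟨hxQ, ⟨hr0, hrc⟩, p_mem_simplex hxQ hr0⟩, ?_⟩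
        rintro ⟨_, ⟨_, hle'⟩, _⟩
        exact absurd hle' (not_le.2 (max_lt hra hr0))
      · rintro ⟨⟨hxQ, ⟨hr0, hrc⟩, hpΔ⟩, hno⟩
        have hx0 : x ≠ 0 := fun h => by rw [h, r_zero] at hr0; exact lt_irrefl 0 hr0
        have hra : ¬ r x ≤ max a 0 := fun h => hno ⟨hxQ, ⟨hr0, h⟩, hpΔ⟩
        exact ⟨⟨hxQ, hx0⟩, (le_max_left a 0).trans_lt (not_le.1 hra), hrc⟩
    rw [heq]
    exact (hD_m0 c _ (isClosed_stdSimplex _ _).measurableSet subset_rfl).diff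
      (hD_m0 (max a 0) _ (isClosed_stdSimplex _ _).measurableSet subset_rfl)
  exact hle I hI

lemma hp_m0 (V : Set (Fin k → ℝ)) (hV : MeasurableSet V) :
    MeasurableSet[m0 k] ((Q k \ {0}) ∩ p ⁻¹' V) := by
  have heq : (Q k \ {0}) ∩ p ⁻¹' V
      = ⋃ m : ℕ, D ((m : ℝ) + 1) (V ∩ stdSimplex ℝ (Fin k)) := by
    ext x
    simp only [mem_inter_iff, mem_diff, mem_preimage, mem_iUnion, D, mem_setOf_eq,
      mem_Ioc, mem_singleton_iff]
    constructor
    · rintro ⟨⟨hxQ, hx0⟩, hpV⟩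
      have hr0 : 0 < r x := r_pos hxQ hx0
      obtain ⟨m, hm⟩ := exists_nat_ge (r x)
      exact ⟨m, hxQ, ⟨hr0, hm.trans (by linarith)⟩, hpV, p_mem_simplex hxQ hr0⟩
    · rintro ⟨m, hxQ, ⟨hr0, _⟩, hpV, _⟩
      have hx0 : x ≠ 0 := fun h => by rw [h, r_zero] at hr0; exact lt_irrefl 0 hr0
      exact ⟨⟨hxQ, hx0⟩, hpV⟩
  rw [heq]
  exact .iUnion fun m => hD_m0 _ _ (hV.inter (isClosed_stdSimplex _ _).measurableSet)
    inter_subset_right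

/-- The map to "polar coordinates". -/
noncomputable def ψ (x : Fin k → ℝ) : ℝ × (Fin k → ℝ) := (r x, p x)

/-- Auxiliary σ-algebra on the product. -/
def gP (k : ℕ) : MeasurableSpace (ℝ × (Fin k → ℝ)) where
  MeasurableSet' B := MeasurableSet[m0 k] ((Q k \ {0}) ∩ ψ ⁻¹' B)
  measurableSet_empty := by
    show MeasurableSet[m0 k] ((Q k \ {0}) ∩ ψ ⁻¹' ∅)
    rw [preimage_empty, inter_empty]; exact @MeasurableSet.empty _ (m0 k)
  measurableSet_compl B hB := by
    show MeasurableSet[m0 k] ((Q k \ {0}) ∩ ψ ⁻¹' Bᶜ)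
    have : (Q k \ {0}) ∩ ψ ⁻¹' Bᶜ = (Q k \ {0}) \ ((Q k \ {0}) ∩ ψ ⁻¹' B) := by
      ext x; simp only [mem_inter_iff, mem_preimage, mem_compl_iff, mem_diff]; tauto
    rw [this]; exact hQ0_m0.diff hB
  measurableSet_iUnion f hf := by
    show MeasurableSet[m0 k] ((Q k \ {0}) ∩ ψ ⁻¹' ⋃ i, f i)
    rw [preimage_iUnion, inter_iUnion]
    exact .iUnion hf

lemma prod_le_gP : (Prod.instMeasurableSpace : MeasurableSpace (ℝ × (Fin k → ℝ))) ≤ gP k := by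
  rw [← generateFrom_prod]
  apply generateFrom_le
  rintro _ ⟨s, hs, t, ht, rfl⟩
  show MeasurableSet[m0 k] ((Q k \ {0}) ∩ ψ ⁻¹' (s ×ˢ t))
  have : (Q k \ {0}) ∩ ψ ⁻¹' (s ×ˢ t)
      = ((Q k \ {0}) ∩ r ⁻¹' s) ∩ ((Q k \ {0}) ∩ p ⁻¹' t) := by
    ext x
    simp only [mem_inter_iff, mem_preimage, mem_prod, ψ]
    tauto
  rw [this]
  exact (hr_m0 s hs).inter (hp_m0 t ht)

lemma inst_le_generateFrom : (inferInstance : MeasurableSpace (Fin k → ℝ)) ≤ m0 k := by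
  intro A hA
  have hB : MeasurableSet ((fun q : ℝ × (Fin k → ℝ) => q.1 • q.2) ⁻¹' A) :=
    (continuous_fst.smul continuous_snd).measurable hA
  have h1 : MeasurableSet[m0 k]
      ((Q k \ {0}) ∩ ψ ⁻¹' ((fun q : ℝ × (Fin k → ℝ) => q.1 • q.2) ⁻¹' A)) :=
    prod_le_gP _ hB
  have h2 : (Q k \ {0}) ∩ ψ ⁻¹' ((fun q : ℝ × (Fin k → ℝ) => q.1 • q.2) ⁻¹' A)
      = A ∩ (Q k \ {0}) := by
    ext x
    simp only [mem_inter_iff, mem_preimage, mem_diff, mem_singleton_iff, ψ]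
    constructor
    · rintro ⟨⟨hxQ, hx0⟩, hψ⟩
      rw [r_smul_p (r_pos hxQ hx0).ne'] at hψ
      exact ⟨hψ, hxQ, hx0⟩
    · rintro ⟨hxA, hxQ, hx0⟩
      refine ⟨⟨hxQ, hx0⟩, ?_⟩
      show r x • p x ∈ A
      rw [r_smul_p (r_pos hxQ hx0).ne']
      exact hxA
  rw [h2] at h1
  have hcover : (Q k)ᶜ ∪ ({0} ∪ (Q k \ {0})) = (univ : Set (Fin k → ℝ)) := by
    ext x
    simp only [mem_union, mem_compl_iff, mem_diff, mem_singleton_iff, mem_univ, iff_true]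
    tauto
  have hdecomp : A = (A ∩ (Q k)ᶜ) ∪ ((A ∩ {0}) ∪ (A ∩ (Q k \ {0}))) := by
    rw [← inter_union_distrib_left, ← inter_union_distrib_left, hcover, inter_univ]
  rw [hdecomp]
  refine MeasurableSet.union ?_ (MeasurableSet.union ?_ h1)
  · exact .basic _ (Or.inr (Or.inr ⟨hA.inter measurableSet_Q.compl, inter_subset_right⟩))
  · by_cases h0 : (0 : Fin k → ℝ) ∈ A
    · have : A ∩ {0} = ({0} : Set (Fin k → ℝ)) := by
        ext x; simp only [mem_inter_iff, mem_singleton_iff]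
        exact ⟨fun h => h.2, fun h => ⟨h ▸ h0, h⟩⟩
      rw [this]; exact h0_m0
    · have : A ∩ {0} = (∅ : Set (Fin k → ℝ)) := by
        ext x; simp only [mem_inter_iff, mem_singleton_iff, mem_empty_iff_false, iff_false]
        rintro ⟨h1', rfl⟩; exact h0 h1'
      rw [this]; exact @MeasurableSet.empty _ (m0 k)

lemma generateFrom_gen_eq :
    (inferInstance : MeasurableSpace (Fin k → ℝ)) = MeasurableSpace.generateFrom (gen k) :=
  le_antisymm inst_le_generateFrom generateFrom_le_inst

end Stmt3Aux

open Stmt3Aux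

/-- Let `n > 0`, `k ≥ 1`, and let `ν`, `ν'` be Borel measures on `ℝ^k`,
each homogeneous of degree `n`, finite on compact sets, and vanishing outside the closed
nonnegative orthant.  If `ν (cone U) = ν' (cone U)` for every Borel set `U ⊆ Δ_k`, then
`ν = ν'`. -/
theorem stmt3 (k : ℕ) (hk : 1 ≤ k) (n : ℝ) (hn : 0 < n)
    (ν ν' : Measure (Fin k → ℝ))
    (hhom : ∀ t : ℝ, 0 < t → ∀ A : Set (Fin k → ℝ), MeasurableSet A →
      ν (t • A) = ENNReal.ofReal (t ^ n) * ν A)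
    (hhom' : ∀ t : ℝ, 0 < t → ∀ A : Set (Fin k → ℝ), MeasurableSet A →
      ν' (t • A) = ENNReal.ofReal (t ^ n) * ν' A)
    (hfin : ∀ K : Set (Fin k → ℝ), IsCompact K → ν K < ⊤)
    (hfin' : ∀ K : Set (Fin k → ℝ), IsCompact K → ν' K < ⊤)
    (horth : ν {x : Fin k → ℝ | ¬ ∀ i, 0 ≤ x i} = 0)
    (horth' : ν' {x : Fin k → ℝ | ¬ ∀ i, 0 ≤ x i} = 0)
    (hcone : ∀ U : Set (Fin k → ℝ), MeasurableSet U → U ⊆ stdSimplex ℝ (Fin k) →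
      ν {y : Fin k → ℝ | ∃ t ∈ Set.Icc (0 : ℝ) 1, ∃ u ∈ U, y = t • u} =
        ν' {y : Fin k → ℝ | ∃ t ∈ Set.Icc (0 : ℝ) 1, ∃ u ∈ U, y = t • u}) :
    ν = ν' := by
  have hQc_eq : {x : Fin k → ℝ | ¬ ∀ i, 0 ≤ x i} = (Q k)ᶜ := rfl
  rw [hQc_eq] at horth horth'
  have key : ∀ μ : Measure (Fin k → ℝ),
      (∀ t : ℝ, 0 < t → ∀ A : Set (Fin k → ℝ), MeasurableSet A →
        μ (t • A) = ENNReal.ofReal (t ^ n) * μ A) →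
      (∀ K : Set (Fin k → ℝ), IsCompact K → μ K < ⊤) →
      (μ ({0} : Set (Fin k → ℝ)) = 0) := by
    intro μ hhomμ hfinμ
    have h2 : (2 : ℝ) • ({0} : Set (Fin k → ℝ)) = {0} := by
      rw [Set.smul_set_singleton, smul_zero]
    have heq := hhomμ 2 two_pos {0} (measurableSet_singleton 0)
    rw [h2] at heq
    have hlt : μ ({0} : Set (Fin k → ℝ)) < ⊤ := hfinμ _ isCompact_singleton
    by_contra hne
    have h1 : (1 : ℝ≥0∞) < ENNReal.ofReal ((2 : ℝ) ^ n) := by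
      rw [show (1 : ℝ≥0∞) = ENNReal.ofReal 1 by simp]
      rw [ENNReal.ofReal_lt_ofReal_iff (by positivity)]
      exact (Real.one_lt_rpow_iff_of_pos two_pos).2 (Or.inl ⟨one_lt_two, hn⟩)
    have hcontra : (1 : ℝ≥0∞) * μ {0} < ENNReal.ofReal ((2 : ℝ) ^ n) * μ {0} :=
      by rw [mul_comm (1 : ℝ≥0∞), mul_comm (ENNReal.ofReal _)]; exact ENNReal.mul_lt_mul_right hne hlt.ne h1
    rw [one_mul, ← heq] at hcontra
    exact lt_irrefl _ hcontra
  have hz := key ν hhom hfin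
  have hz' := key ν' hhom' hfin'
  have hconeD : ∀ μ : Measure (Fin k → ℝ), μ ({0} : Set (Fin k → ℝ)) = 0 →
      ∀ U : Set (Fin k → ℝ), U ⊆ stdSimplex ℝ (Fin k) →
      μ {y : Fin k → ℝ | ∃ t ∈ Set.Icc (0 : ℝ) 1, ∃ u ∈ U, y = t • u} = μ (D 1 U) := by
    intro μ h0 U hUs
    refine le_antisymm ?_ (measure_mono D_one_subset_coneSet)
    calc μ {y : Fin k → ℝ | ∃ t ∈ Set.Icc (0 : ℝ) 1, ∃ u ∈ U, y = t • u}
        ≤ μ (D 1 U ∪ {0}) := measure_mono (coneSet_subset hUs)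
      _ ≤ μ (D 1 U) + μ {0} := measure_union_le _ _
      _ = μ (D 1 U) := by rw [h0, add_zero]
  have h_eq : ∀ s ∈ gen k, ν s = ν' s := by
    rintro s (⟨b, hb, U, hU, hUs, rfl⟩ | rfl | ⟨hsm, hssub⟩)
    · rw [D_eq_smul hb, hhom b hb _ (measurableSet_D hU), hhom' b hb _ (measurableSet_D hU),
        ← hconeD ν hz U hUs, ← hconeD ν' hz' U hUs, hcone U hU hUs]
    · rw [hz, hz']
    · rw [measure_mono_null hssub horth, measure_mono_null hssub horth']
  refine Measure.ext_of_generateFrom_of_cover_subset generateFrom_gen_eq isPiSystem_gen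
    (T := insert ((Q k)ᶜ) (insert ({0} : Set (Fin k → ℝ))
      (range fun m : ℕ => D ((m : ℝ) + 1) (stdSimplex ℝ (Fin k))))) ?_ ?_ ?_ ?_ h_eq
  · rintro s (rfl | rfl | ⟨m, rfl⟩)
    · exact Or.inr (Or.inr ⟨measurableSet_Q.compl, subset_rfl⟩)
    · exact Or.inr (Or.inl rfl)
    · exact Or.inl ⟨(m : ℝ) + 1, by positivity, _,
        (isClosed_stdSimplex _ _).measurableSet, subset_rfl, rfl⟩
  · exact ((countable_range _).insert _).insert _
  · apply eq_univ_of_forall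
    intro x
    rw [mem_sUnion]
    by_cases hxQ : x ∈ Q k
    · by_cases hx0 : x = 0
      · exact ⟨{0}, Or.inr (Or.inl rfl), by simp [hx0]⟩
      · obtain ⟨m, hm⟩ := exists_nat_ge (r x)
        have hr0 : 0 < r x := r_pos hxQ hx0
        refine ⟨D ((m : ℝ) + 1) (stdSimplex ℝ (Fin k)),
          Or.inr (Or.inr ⟨m, rfl⟩),
          hxQ, ⟨hr0, hm.trans (by linarith)⟩, p_mem_simplex hxQ hr0⟩
    · exact ⟨(Q k)ᶜ, Or.inl rfl, hxQ⟩
  · rintro s (rfl | rfl | ⟨m, rfl⟩)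
    · rw [horth]; exact ENNReal.zero_ne_top
    · rw [hz]; exact ENNReal.zero_ne_top
    · have hsub : D ((m : ℝ) + 1) (stdSimplex ℝ (Fin k))
          ⊆ Icc (0 : Fin k → ℝ) (fun _ => (m : ℝ) + 1) := by
        rintro x ⟨hxQ, ⟨_, hrb⟩, _⟩
        constructor
        · intro i; exact hxQ i
        · intro i
          calc x i ≤ r x := Finset.single_le_sum (fun j _ => hxQ j) (Finset.mem_univ i)
            _ ≤ (m : ℝ) + 1 := hrb
      exact ((measure_mono hsub).trans_lt (hfin _ isCompact_Icc)).ne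
end

section
/- Let S ⊆ ℝ^M be a set whose intersection with every compact set is finite, let n be a real number, and let ν be a Borel measure on ℝ^M, finite on compact sets, such that the rescaled counting measures of S converge vaguely with order n to ν. Then ν is homogeneous of degree n: ν(t • A) = t^n · ν(A) for every real t > 0 and every Borel set A ⊆ ℝ^M. -/
open MeasureTheory Set Filter
open scoped Pointwise ENNReal BigOperators

/-- The rescaled counting measures of `S ⊆ ℝ^M` converge vaguely with order `n` to `ν`:
for every continuous compactly supported `f : ℝ^M → ℝ`,
`lim_{L→∞} L^{-n} ∑_{x ∈ S} f (L⁻¹ • x) = ∫ f dν`, the limit over real `L → ∞`. -/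
def VagueLimit {M : ℕ} (S : Set (Fin M → ℝ)) (n : ℝ) (ν : Measure (Fin M → ℝ)) : Prop :=
  ∀ f : (Fin M → ℝ) → ℝ, Continuous f → HasCompactSupport f →
    Tendsto (fun L : ℝ => L ^ (-n) * ∑ᶠ x ∈ S, f (L⁻¹ • x)) atTop
      (nhds (∫ x, f x ∂ν))

/-- Let `S ⊆ ℝ^M` intersect every compact set in a finite set, let `n`
be real, and let `ν` be a Borel measure on `ℝ^M`, finite on compact sets, such that the
rescaled counting measures of `S` converge vaguely with order `n` to `ν`.  Then `ν` is
homogeneous of degree `n`. -/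
theorem stmt8 (M : ℕ) (S : Set (Fin M → ℝ))
    (hS : ∀ K : Set (Fin M → ℝ), IsCompact K → (S ∩ K).Finite)
    (n : ℝ) (ν : Measure (Fin M → ℝ))
    (hfin : ∀ K : Set (Fin M → ℝ), IsCompact K → ν K < ⊤)
    (hvague : VagueLimit S n ν) :
    ∀ t : ℝ, 0 < t → ∀ A : Set (Fin M → ℝ), MeasurableSet A →
      ν (t • A) = ENNReal.ofReal (t ^ n) * ν A := by
  intro t ht A hA
  have htn : (0:ℝ) < t ^ n := Real.rpow_pos_of_pos ht n
  set c : ℝ≥0∞ := ENNReal.ofReal (t ^ n) with hc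
  have hc0 : c ≠ 0 := (ENNReal.ofReal_pos.2 htn).ne'
  have hctop : c ≠ ⊤ := ENNReal.ofReal_ne_top
  haveI : IsFiniteMeasureOnCompacts ν := ⟨fun {K} hK => hfin K hK⟩
  set φ : (Fin M → ℝ) → (Fin M → ℝ) := fun x => t⁻¹ • x with hφ
  have hφm : Measurable φ := measurable_const_smul t⁻¹
  set μ : Measure (Fin M → ℝ) := ν.map φ with hμ
  have hpre : ∀ s : Set (Fin M → ℝ), φ ⁻¹' s = t • s := fun s =>
    Set.preimage_smul_inv₀ ht.ne' s
  have hμapp : ∀ s : Set (Fin M → ℝ), MeasurableSet s → μ s = ν (t • s) := by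
    intro s hs
    rw [hμ, Measure.map_apply hφm hs, hpre]
  haveI : IsFiniteMeasureOnCompacts μ := by
    constructor
    intro K hK
    rw [hμapp K hK.measurableSet]
    exact hfin _ (hK.smul t)
  -- key integral identity
  have key : ∀ f : (Fin M → ℝ) → ℝ, Continuous f → HasCompactSupport f →
      ∫ x, f (t⁻¹ • x) ∂ν = t ^ n * ∫ x, f x ∂ν := by
    intro f hf hsupp
    have hg : Continuous fun x : Fin M → ℝ => f (t⁻¹ • x) :=
      hf.comp (continuous_const_smul _)
    have hgs : HasCompactSupport fun x : Fin M → ℝ => f (t⁻¹ • x) :=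
      hsupp.comp_smul (inv_ne_zero ht.ne')
    have h1 := hvague _ hg hgs
    have h2 := hvague f hf hsupp
    have hmul : Tendsto (fun L : ℝ => t * L) atTop atTop :=
      Tendsto.const_mul_atTop ht tendsto_id
    have h3 : Tendsto (fun L : ℝ =>
        t ^ n * ((t * L) ^ (-n) * ∑ᶠ x ∈ S, f ((t * L)⁻¹ • x))) atTop
        (nhds (t ^ n * ∫ x, f x ∂ν)) := (h2.comp hmul).const_mul _
    have h5 : (fun L : ℝ =>
        t ^ n * ((t * L) ^ (-n) * ∑ᶠ x ∈ S, f ((t * L)⁻¹ • x)))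
        =ᶠ[atTop] fun L : ℝ => L ^ (-n) * ∑ᶠ x ∈ S, f (t⁻¹ • L⁻¹ • x) := by
      filter_upwards [eventually_gt_atTop (0:ℝ)] with L hL
      have hrw : (t * L) ^ (-n) = t ^ (-n) * L ^ (-n) :=
        Real.mul_rpow ht.le hL.le
      have hsum : (∑ᶠ x ∈ S, f ((t * L)⁻¹ • x)) = ∑ᶠ x ∈ S, f (t⁻¹ • L⁻¹ • x) := by
        apply finsum_congr; intro x
        congr 1
        by_cases hx : x ∈ S <;> simp [smul_smul, mul_inv, mul_comm]
      rw [hsum, hrw, ← mul_assoc, ← mul_assoc, ← Real.rpow_add ht]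
      simp
    have h6 := h3.congr' h5
    have := tendsto_nhds_unique h1 h6
    rw [← this]
  -- measures of compact sets
  have hcomp : ∀ k : Set (Fin M → ℝ), IsCompact k → μ k = c * ν k := by
    intro k hk
    rw [hk.measure_eq_biInf_integral_hasCompactSupport μ,
      hk.measure_eq_biInf_integral_hasCompactSupport ν]
    simp_rw [ENNReal.mul_iInf_of_ne hc0 hctop]
    refine iInf_congr fun f => iInf_congr fun hf => iInf_congr fun h2 =>
      iInf_congr fun h3 => iInf_congr fun h4 => ?_
    have : ∫ x, f x ∂μ = ∫ x, f (t⁻¹ • x) ∂ν := by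
      rw [hμ, integral_map hφm.aemeasurable hf.aestronglyMeasurable]
    rw [this, key f hf h2, hc, ← ENNReal.ofReal_mul htn.le]
  -- conclude for measurable sets via regularity
  have hmeas : μ A = c * ν A := by
    rw [Set.measure_eq_iInf_isOpen A μ, Set.measure_eq_iInf_isOpen A ν]
    simp_rw [ENNReal.mul_iInf_of_ne hc0 hctop]
    refine iInf_congr fun U => iInf_congr fun hAU => iInf_congr fun hU => ?_
    rw [hU.measure_eq_iSup_isCompact μ, hU.measure_eq_iSup_isCompact ν]
    simp_rw [ENNReal.mul_iSup]
    exact iSup_congr fun K => iSup_congr fun hKU => iSup_congr fun hK => hcomp K hK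
  rw [← hμapp A hA, hmeas]
end

section
/- Let S ⊆ ℝ^M be a set whose intersection with every compact set is finite, let n be a real number, and let ν be a Borel measure on ℝ^M, finite on compact sets, such that the rescaled counting measures of S converge vaguely with order n to ν. Let d > 0 be a real number and let g : ℝ^M → [0,∞) be continuous with g(t·x) = t^d·g(x) for all t ≥ 0 and x ∈ ℝ^M, and suppose there is a constant c ≥ 0 with g(x) = c for every x ∈ S. Then ν({x ∈ ℝ^M : g(x) > 0}) = 0, i.e. ν is supported on the zero set of g. -/
open MeasureTheory Set Filter
open scoped Pointwise ENNReal BigOperators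

/-! Multiplying a test function `φ` by `g` multiplies the rescaled sum at scale `L` by
`L ^ (-d) * c`, which tends to `0`; hence `∫ φ • g ∂ν = 0` for all test functions `φ`, and so
`g = 0` almost everywhere. -/

section VagueLimit

variable {M : ℕ} {S : Set (Fin M → ℝ)} {n d c : ℝ} {ν : Measure (Fin M → ℝ)}
  {g φ : (Fin M → ℝ) → ℝ}

theorem rescaled_finsum_mul_of_homogeneous
    (hgh : ∀ t : ℝ, 0 ≤ t → ∀ x : Fin M → ℝ, g (t • x) = t ^ d * g x)
    (hgS : ∀ x ∈ S, g x = c) {L : ℝ} (hL : 0 < L) :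
    L ^ (-n) * ∑ᶠ x ∈ S, φ (L⁻¹ • x) * g (L⁻¹ • x)
      = L ^ (-d) * c * (L ^ (-n) * ∑ᶠ x ∈ S, φ (L⁻¹ • x)) := by
  have hscale : ∀ x ∈ S, φ (L⁻¹ • x) * g (L⁻¹ • x) = L ^ (-d) * c * φ (L⁻¹ • x) := by
    intro x hx
    rw [hgh L⁻¹ (inv_nonneg.mpr hL.le), hgS x hx, Real.inv_rpow hL.le, ← Real.rpow_neg hL.le]
    ring
  rw [finsum_mem_congr rfl hscale, ← mul_finsum_mem]
  ring

theorem VagueLimit.integral_smul_eq_zero_of_homogeneous (hvague : VagueLimit S n ν)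
    (hd : 0 < d) (hgc : Continuous g)
    (hgh : ∀ t : ℝ, 0 ≤ t → ∀ x : Fin M → ℝ, g (t • x) = t ^ d * g x)
    (hgS : ∀ x ∈ S, g x = c) (hφc : Continuous φ) (hφs : HasCompactSupport φ) :
    ∫ x, φ x • g x ∂ν = 0 := by
  have hlim := hvague _ (hφc.mul hgc) hφs.mul_right
  have hfactor : Tendsto (fun L : ℝ => L ^ (-d) * c) atTop (nhds 0) := by
    simpa using (tendsto_rpow_neg_atTop hd).mul_const c
  have hzero := (hfactor.mul (hvague φ hφc hφs)).congr' <|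
    (eventually_gt_atTop 0).mono fun L hL =>
      (rescaled_finsum_mul_of_homogeneous (φ := φ) hgh hgS hL).symm
  rw [zero_mul] at hzero
  exact tendsto_nhds_unique hlim hzero

end VagueLimit

theorem stmt9_general (M : ℕ) (S : Set (Fin M → ℝ))
    (n : ℝ) (ν : Measure (Fin M → ℝ))
    (hfin : ∀ K : Set (Fin M → ℝ), IsCompact K → ν K < ⊤)
    (hvague : VagueLimit S n ν)
    (d : ℝ) (hd : 0 < d)
    (g : (Fin M → ℝ) → ℝ) (hgc : Continuous g)
    (hgh : ∀ t : ℝ, 0 ≤ t → ∀ x : Fin M → ℝ, g (t • x) = t ^ d * g x)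
    (c : ℝ) (hgS : ∀ x ∈ S, g x = c) :
    ν {x : Fin M → ℝ | 0 < g x} = 0 := by
  have : IsFiniteMeasureOnCompacts ν := ⟨fun {K} hK => hfin K hK⟩
  have hg_ae : ∀ᵐ x ∂ν, g x = 0 :=
    ae_eq_zero_of_integral_contDiff_smul_eq_zero hgc.locallyIntegrable fun φ hφ hφs =>
      hvague.integral_smul_eq_zero_of_homogeneous hd hgc hgh hgS hφ.continuous hφs
  exact measure_mono_null (fun x hx => ne_of_gt hx) (ae_iff.mp hg_ae)

/-- Let `S ⊆ ℝ^M` intersect every compact set in a finite set, let `n`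
be real, and let `ν` be a Borel measure on `ℝ^M`, finite on compact sets, such that the
rescaled counting measures of `S` converge vaguely with order `n` to `ν`.  Let `d > 0` be
real and `g : ℝ^M → [0,∞)` continuous with `g (t • x) = t^d · g x` for `t ≥ 0`, taking a
constant value `c ≥ 0` on `S`.  Then `ν {x | g x > 0} = 0`. -/
theorem stmt9 (M : ℕ) (S : Set (Fin M → ℝ))
    (hS : ∀ K : Set (Fin M → ℝ), IsCompact K → (S ∩ K).Finite)
    (n : ℝ) (ν : Measure (Fin M → ℝ))
    (hfin : ∀ K : Set (Fin M → ℝ), IsCompact K → ν K < ⊤)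
    (hvague : VagueLimit S n ν)
    (d : ℝ) (hd : 0 < d)
    (g : (Fin M → ℝ) → ℝ) (hg0 : ∀ x, 0 ≤ g x) (hgc : Continuous g)
    (hgh : ∀ t : ℝ, 0 ≤ t → ∀ x : Fin M → ℝ, g (t • x) = t ^ d * g x)
    (c : ℝ) (hc : 0 ≤ c) (hgS : ∀ x ∈ S, g x = c) :
    ν {x : Fin M → ℝ | 0 < g x} = 0 :=
  stmt9_general M S n ν hfin hvague d hd g hgc hgh c hgS
end

section
/- Let S ⊆ ℝ^M be a set whose intersection with every compact set is finite, let n > 0 be a real number, and let ν be a Borel measure on ℝ^M, finite on compact sets, such that the rescaled counting measures of S converge vaguely with order n to ν. Let φ : ℝ^M → ℝ be continuous, positively homogeneous of degree 1, with φ(x) > 0 for every x ≠ 0. Then ν({x ∈ ℝ^M : φ(x) ≤ 1}) is finite, the sets {x ∈ S : φ(x) ≤ L} are finite for every L, and lim_{L→∞} L^{−n} · |{x ∈ S : φ(x) ≤ L}| = ν({x ∈ ℝ^M : φ(x) ≤ 1}). -/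
open MeasureTheory Set Filter
open scoped Pointwise ENNReal BigOperators

/-- Let `S ⊆ ℝ^M` intersect every compact set in a finite set, let
`n > 0` be real, and let `ν` be a Borel measure on `ℝ^M`, finite on compact sets, such
that the rescaled counting measures of `S` converge vaguely with order `n` to `ν`.
Let `φ : ℝ^M → ℝ` be continuous, positively homogeneous of degree 1, with `φ x > 0` for
`x ≠ 0`.  Then `ν {x | φ x ≤ 1}` is finite, the sets `{x ∈ S | φ x ≤ L}` are finite, and
`lim_{L→∞} L^(-n) · |{x ∈ S | φ x ≤ L}| = ν {x | φ x ≤ 1}`. -/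
theorem stmt10 (M : ℕ) (S : Set (Fin M → ℝ))
    (hS : ∀ K : Set (Fin M → ℝ), IsCompact K → (S ∩ K).Finite)
    (n : ℝ) (hn : 0 < n) (ν : Measure (Fin M → ℝ))
    (hfin : ∀ K : Set (Fin M → ℝ), IsCompact K → ν K < ⊤)
    (hvague : VagueLimit S n ν)
    (φ : (Fin M → ℝ) → ℝ) (hφc : Continuous φ)
    (hφh : ∀ t : ℝ, 0 ≤ t → ∀ x : Fin M → ℝ, φ (t • x) = t * φ x)
    (hφp : ∀ x : Fin M → ℝ, x ≠ 0 → 0 < φ x) :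
    ν {x : Fin M → ℝ | φ x ≤ 1} ≠ ⊤ ∧
      (∀ L : ℝ, {x ∈ S | φ x ≤ L}.Finite) ∧
      Tendsto (fun L : ℝ => L ^ (-n) * ({x ∈ S | φ x ≤ L}.ncard : ℝ)) atTop
        (nhds (ν {x : Fin M → ℝ | φ x ≤ 1}).toReal) := by
  classical
  haveI : IsFiniteMeasureOnCompacts ν := ⟨fun {K} hK => hfin K hK⟩
  have hφ0 : φ (0 : Fin M → ℝ) = 0 := by
    have := hφh 0 le_rfl 0; simpa using this
  -- linear lower bound
  have hlb : ∃ m : ℝ, 0 < m ∧ ∀ x : Fin M → ℝ, m * ‖x‖ ≤ φ x := by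
    rcases Nat.eq_zero_or_pos M with hM | hM
    · refine ⟨1, one_pos, fun x => ?_⟩
      have hx : x = 0 := by
        subst hM
        exact funext fun i => absurd i.2 (by omega)
      simp [hx, hφ0]
    · haveI : Nonempty (Fin M) := ⟨⟨0, hM⟩⟩
      have hsph : (Metric.sphere (0 : Fin M → ℝ) 1).Nonempty :=
        NormedSpace.sphere_nonempty.2 zero_le_one
      obtain ⟨u, hu, hmin⟩ :=
        (isCompact_sphere (0 : Fin M → ℝ) 1).exists_isMinOn hsph hφc.continuousOn
      have hunorm : ‖u‖ = 1 := by simpa using hu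
      have hune : u ≠ 0 := by
        intro h; rw [h] at hunorm; simp at hunorm
      have hum : 0 < φ u := hφp u hune
      refine ⟨φ u, hum, fun x => ?_⟩
      rcases eq_or_ne x 0 with rfl | hx
      · simp [hφ0]
      · have hxn : 0 < ‖x‖ := norm_pos_iff.2 hx
        have hmem : (‖x‖⁻¹ • x) ∈ Metric.sphere (0 : Fin M → ℝ) 1 := by
          simp [norm_smul, abs_of_pos (inv_pos.2 hxn), inv_mul_cancel₀ hxn.ne']
        have h1 : φ u ≤ φ (‖x‖⁻¹ • x) := hmin hmem
        rw [hφh _ (inv_nonneg.2 hxn.le) x] at h1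
        have h2 := mul_le_mul_of_nonneg_right h1 hxn.le
        calc φ u * ‖x‖ ≤ ‖x‖⁻¹ * φ x * ‖x‖ := h2
          _ = φ x := by field_simp
  obtain ⟨m, hm, hmle⟩ := hlb
  have hK : ∀ t : ℝ, IsCompact {x : Fin M → ℝ | φ x ≤ t} := by
    intro t
    refine Metric.isCompact_of_isClosed_isBounded (isClosed_le hφc continuous_const) ?_
    refine (Metric.isBounded_closedBall (x := (0 : Fin M → ℝ)) (r := t / m)).subset ?_
    intro x hx
    simp only [mem_setOf_eq] at hx
    have : m * ‖x‖ ≤ t := le_trans (hmle x) hx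
    simp only [Metric.mem_closedBall, dist_zero_right]
    rw [le_div_iff₀ hm]
    linarith
  have hν1 : ν {x : Fin M → ℝ | φ x ≤ 1} ≠ ⊤ := (hfin _ (hK 1)).ne
  have hTeq : ∀ L : ℝ, {x ∈ S | φ x ≤ L} = S ∩ {x : Fin M → ℝ | φ x ≤ L} := fun L => rfl
  have hTfin : ∀ L : ℝ, {x ∈ S | φ x ≤ L}.Finite := fun L => by
    rw [hTeq]; exact hS _ (hK L)
  refine ⟨hν1, hTfin, ?_⟩
  set c := (ν {x : Fin M → ℝ | φ x ≤ 1}).toReal with hc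
  set F : ℝ → ℝ := fun L => L ^ (-n) * (({x ∈ S | φ x ≤ L}).ncard : ℝ) with hFdef
  -- key construction for each δ > 0
  have key : ∀ δ : ℝ, 0 < δ → ∃ I : ℝ, ∃ h : ℝ → ℝ,
      Tendsto h atTop (nhds I) ∧ c ≤ I ∧ I ≤ (ν {x : Fin M → ℝ | φ x ≤ 1 + δ}).toReal ∧
      (∀ᶠ L in atTop, F L ≤ h L) ∧
      (∀ᶠ L in atTop, h L ≤ (1 + δ) ^ n * F ((1 + δ) * L)) := by
    intro δ hδ
    set ψ : ℝ → ℝ := fun r => max 0 (min 1 ((1 + δ - r) / δ)) with hψdef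
    have hψc : Continuous ψ := by
      apply continuous_const.max
      exact continuous_const.min (by fun_prop)
    have hψ1 : ∀ r : ℝ, r ≤ 1 → ψ r = 1 := by
      intro r hr
      have : (1 : ℝ) ≤ (1 + δ - r) / δ := by
        rw [le_div_iff₀ hδ]; linarith
      simp [hψdef, min_eq_left this]
    have hψ0 : ∀ r : ℝ, 1 + δ ≤ r → ψ r = 0 := by
      intro r hr
      have h1 : (1 + δ - r) / δ ≤ 0 :=
        div_nonpos_of_nonpos_of_nonneg (by linarith) hδ.le
      have : min 1 ((1 + δ - r) / δ) ≤ 0 := le_trans (min_le_right _ _) h1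
      simp [hψdef, max_eq_left this]
    have hψnn : ∀ r : ℝ, 0 ≤ ψ r := fun r => le_max_left _ _
    have hψle1 : ∀ r : ℝ, ψ r ≤ 1 := by
      intro r
      apply max_le zero_le_one (min_le_left _ _)
    have hψpos_le : ∀ r : ℝ, ψ r ≠ 0 → r ≤ 1 + δ := by
      intro r hr
      by_contra h
      exact hr (hψ0 r (by linarith))
    set g : (Fin M → ℝ) → ℝ := fun x => ψ (φ x) with hgdef
    have hgc : Continuous g := hψc.comp hφc
    have hgs : HasCompactSupport g := by
      apply HasCompactSupport.intro (hK (1 + δ))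
      intro x hx
      simp only [mem_setOf_eq, not_le] at hx
      exact hψ0 _ hx.le
    have hgnn : ∀ x, 0 ≤ g x := fun x => hψnn _
    have hgle1 : ∀ x, g x ≤ 1 := fun x => hψle1 _
    have htend := hvague g hgc hgs
    have hint : Integrable g ν := hgc.integrable_of_hasCompactSupport hgs
    refine ⟨∫ x, g x ∂ν, fun L => L ^ (-n) * ∑ᶠ x ∈ S, g (L⁻¹ • x), htend, ?_, ?_, ?_, ?_⟩
    · -- c ≤ ∫ g
      have hmeas : MeasurableSet {x : Fin M → ℝ | φ x ≤ 1} :=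
        (isClosed_le hφc continuous_const).measurableSet
      have hind : Integrable ({x : Fin M → ℝ | φ x ≤ 1}.indicator (fun _ => (1:ℝ))) ν := by
        rw [integrable_indicator_iff hmeas]
        exact integrableOn_const (hfin _ (hK 1)).ne
      have hle : ∀ x, ({x : Fin M → ℝ | φ x ≤ 1}.indicator (fun _ => (1:ℝ))) x ≤ g x := by
        intro x
        by_cases hx : φ x ≤ 1
        · rw [Set.indicator_of_mem (show x ∈ {x : Fin M → ℝ | φ x ≤ 1} from hx)]
          exact le_of_eq (hψ1 _ hx).symm
        · rw [Set.indicator_of_notMem (show x ∉ {x : Fin M → ℝ | φ x ≤ 1} from hx)]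
          exact hgnn x
      calc c = ∫ x, ({x : Fin M → ℝ | φ x ≤ 1}.indicator (fun _ => (1:ℝ))) x ∂ν := by
              rw [hc]; change ν.real {x : Fin M → ℝ | φ x ≤ 1} = _; rw [← integral_indicator_one hmeas]; rfl
        _ ≤ ∫ x, g x ∂ν := integral_mono hind hint hle
    · -- ∫ g ≤ ν {φ ≤ 1+δ}
      have hmeas : MeasurableSet {x : Fin M → ℝ | φ x ≤ 1 + δ} :=
        (isClosed_le hφc continuous_const).measurableSet
      have hind : Integrable ({x : Fin M → ℝ | φ x ≤ 1 + δ}.indicator (fun _ => (1:ℝ))) ν := by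
        rw [integrable_indicator_iff hmeas]
        exact integrableOn_const (hfin _ (hK (1 + δ))).ne
      have hle : ∀ x, g x ≤ ({x : Fin M → ℝ | φ x ≤ 1 + δ}.indicator (fun _ => (1:ℝ))) x := by
        intro x
        by_cases hx : φ x ≤ 1 + δ
        · rw [Set.indicator_of_mem (show x ∈ {x : Fin M → ℝ | φ x ≤ 1 + δ} from hx)]
          exact hgle1 x
        · rw [Set.indicator_of_notMem (show x ∉ {x : Fin M → ℝ | φ x ≤ 1 + δ} from hx)]
          exact le_of_eq (hψ0 _ (by push_neg at hx; exact hx.le))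
      calc ∫ x, g x ∂ν ≤ ∫ x, ({x : Fin M → ℝ | φ x ≤ 1 + δ}.indicator (fun _ => (1:ℝ))) x ∂ν :=
            integral_mono hint hind hle
        _ = (ν {x : Fin M → ℝ | φ x ≤ 1 + δ}).toReal := by
            change _ = ν.real {x : Fin M → ℝ | φ x ≤ 1 + δ}; rw [← integral_indicator_one hmeas]; rfl
    · -- F L ≤ h L eventually
      filter_upwards [eventually_gt_atTop (0 : ℝ)] with L hL
      have hmono : ((({x ∈ S | φ x ≤ L}).ncard : ℝ)) ≤ ∑ᶠ x ∈ S, g (L⁻¹ • x) := by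
        set u : (Fin M → ℝ) → ℝ := fun x => g (L⁻¹ • x) with hudef
        have hu1 : ∀ x : Fin M → ℝ, φ x ≤ L → u x = 1 := by
          intro x hx
          have : φ (L⁻¹ • x) = L⁻¹ * φ x := hφh _ (inv_nonneg.2 hL.le) x
          have hle1 : φ (L⁻¹ • x) ≤ 1 := by
            rw [this, ← inv_mul_cancel₀ hL.ne']
            exact mul_le_mul_of_nonneg_left hx (inv_nonneg.2 hL.le)
          exact hψ1 _ hle1
        have husupp : ∀ x : Fin M → ℝ, u x ≠ 0 → φ x ≤ (1 + δ) * L := by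
          intro x hx
          have h1 : φ (L⁻¹ • x) ≤ 1 + δ := hψpos_le _ hx
          have h2 : φ (L⁻¹ • x) = L⁻¹ * φ x := hφh _ (inv_nonneg.2 hL.le) x
          rw [h2] at h1
          calc φ x = L * (L⁻¹ * φ x) := by field_simp
            _ ≤ L * (1 + δ) := mul_le_mul_of_nonneg_left h1 hL.le
            _ = (1 + δ) * L := mul_comm _ _
        have hsfin : (S ∩ Function.support u).Finite := by
          apply (hTfin ((1 + δ) * L)).subset
          rintro x ⟨hxS, hxu⟩
          exact ⟨hxS, husupp x hxu⟩
        rw [finsum_mem_eq_sum u hsfin]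
        have hsub : (hTfin L).toFinset ⊆ hsfin.toFinset := by
          intro x hx
          simp only [Finite.mem_toFinset] at hx ⊢
          exact ⟨hx.1, by rw [Function.mem_support, hu1 x hx.2]; norm_num⟩
        calc ((({x ∈ S | φ x ≤ L}).ncard : ℝ))
            = ∑ x ∈ (hTfin L).toFinset, (1 : ℝ) := by
              rw [Set.ncard_eq_toFinset_card _ (hTfin L)]; simp
          _ = ∑ x ∈ (hTfin L).toFinset, u x := by
              apply Finset.sum_congr rfl
              intro x hx
              simp only [Finite.mem_toFinset] at hx
              exact (hu1 x hx.2).symm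
          _ ≤ ∑ x ∈ hsfin.toFinset, u x :=
              Finset.sum_le_sum_of_subset_of_nonneg hsub (fun x _ _ => hgnn _)
      exact mul_le_mul_of_nonneg_left hmono (Real.rpow_nonneg hL.le _)
    · -- h L ≤ (1+δ)^n F((1+δ)L) eventually
      filter_upwards [eventually_gt_atTop (0 : ℝ)] with L hL
      have hδ1 : (0:ℝ) < 1 + δ := by linarith
      have hmono : (∑ᶠ x ∈ S, g (L⁻¹ • x)) ≤ (({x ∈ S | φ x ≤ (1 + δ) * L}).ncard : ℝ) := by
        set u : (Fin M → ℝ) → ℝ := fun x => g (L⁻¹ • x) with hudef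
        have husupp : ∀ x : Fin M → ℝ, u x ≠ 0 → φ x ≤ (1 + δ) * L := by
          intro x hx
          have h1 : φ (L⁻¹ • x) ≤ 1 + δ := hψpos_le _ hx
          have h2 : φ (L⁻¹ • x) = L⁻¹ * φ x := hφh _ (inv_nonneg.2 hL.le) x
          rw [h2] at h1
          calc φ x = L * (L⁻¹ * φ x) := by field_simp
            _ ≤ L * (1 + δ) := mul_le_mul_of_nonneg_left h1 hL.le
            _ = (1 + δ) * L := mul_comm _ _
        have hsfin : (S ∩ Function.support u).Finite := by
          apply (hTfin ((1 + δ) * L)).subset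
          rintro x ⟨hxS, hxu⟩
          exact ⟨hxS, husupp x hxu⟩
        rw [finsum_mem_eq_sum u hsfin]
        have hsub : hsfin.toFinset ⊆ (hTfin ((1 + δ) * L)).toFinset := by
          intro x hx
          simp only [Finite.mem_toFinset] at hx ⊢
          exact ⟨hx.1, husupp x hx.2⟩
        calc ∑ x ∈ hsfin.toFinset, u x
            ≤ ∑ x ∈ (hTfin ((1 + δ) * L)).toFinset, u x :=
              Finset.sum_le_sum_of_subset_of_nonneg hsub (fun x _ _ => hgnn _)
          _ ≤ ∑ x ∈ (hTfin ((1 + δ) * L)).toFinset, (1:ℝ) :=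
              Finset.sum_le_sum (fun x _ => hgle1 _)
          _ = (({x ∈ S | φ x ≤ (1 + δ) * L}).ncard : ℝ) := by
              rw [Set.ncard_eq_toFinset_card _ (hTfin ((1 + δ) * L))]; simp
      have hrpow : L ^ (-n) = (1 + δ) ^ n * ((1 + δ) * L) ^ (-n) := by
        rw [Real.mul_rpow hδ1.le hL.le, ← mul_assoc, ← Real.rpow_add hδ1]
        simp
      calc L ^ (-n) * ∑ᶠ x ∈ S, g (L⁻¹ • x)
          ≤ L ^ (-n) * (({x ∈ S | φ x ≤ (1 + δ) * L}).ncard : ℝ) :=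
            mul_le_mul_of_nonneg_left hmono (Real.rpow_nonneg hL.le _)
        _ = (1 + δ) ^ n * F ((1 + δ) * L) := by
            rw [hrpow, hFdef]; ring
  -- now assemble
  have hF0 : ∀ᶠ L in atTop, 0 ≤ F L := by
    filter_upwards [eventually_gt_atTop (0 : ℝ)] with L hL
    exact mul_nonneg (Real.rpow_nonneg hL.le _) (Nat.cast_nonneg _)
  obtain ⟨I₁, h₁, hth₁, hcI₁, hI₁, hFh₁, _⟩ := key 1 one_pos
  have hbddA : IsBoundedUnder (· ≤ ·) atTop F :=
    (hth₁.isBoundedUnder_le).mono_le hFh₁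
  have hbddB : IsBoundedUnder (· ≥ ·) atTop F := ⟨0, by simpa using hF0⟩
  set A := limsup F atTop with hA
  set B := liminf F atTop with hB
  -- A ≤ ν{φ ≤ 1+δ} for all δ > 0
  have hAle : ∀ δ : ℝ, 0 < δ → A ≤ (ν {x : Fin M → ℝ | φ x ≤ 1 + δ}).toReal := by
    intro δ hδ
    obtain ⟨I, h, hth, hcI, hIν, hFh, _⟩ := key δ hδ
    calc A ≤ limsup h atTop :=
          limsup_le_limsup hFh hbddB.isCoboundedUnder_le hth.isBoundedUnder_le
      _ = I := hth.limsup_eq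
      _ ≤ _ := hIν
  -- c ≤ (1+δ)^n * B : via (1+δ)^(-n) * c ≤ B
  have hBge : ∀ δ : ℝ, 0 < δ → (1 + δ) ^ (-n) * c ≤ B := by
    intro δ hδ
    have hδ1 : (0:ℝ) < 1 + δ := by linarith
    obtain ⟨I, h, hth, hcI, hIν, hFh, hhF⟩ := key δ hδ
    -- map fact
    have hmapto : Tendsto (fun L : ℝ => (1 + δ) * L) atTop atTop :=
      Tendsto.const_mul_atTop hδ1 tendsto_id
    have hmapto' : Tendsto (fun L : ℝ => (1 + δ)⁻¹ * L) atTop atTop :=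
      Tendsto.const_mul_atTop (inv_pos.2 hδ1) tendsto_id
    have hmap : Filter.map (fun L : ℝ => (1 + δ) * L) atTop = atTop := by
      refine le_antisymm hmapto ?_
      have hid : ((fun L : ℝ => (1 + δ) * L) ∘ (fun L : ℝ => (1 + δ)⁻¹ * L)) = id := by
        funext L
        simp only [Function.comp_apply, id_eq]
        field_simp
      have h4 : Filter.map (fun L : ℝ => (1 + δ) * L)
          (Filter.map (fun L : ℝ => (1 + δ)⁻¹ * L) atTop) = atTop := by
        rw [Filter.map_map, hid, Filter.map_id]
      calc atTop = Filter.map (fun L : ℝ => (1 + δ) * L)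
              (Filter.map (fun L : ℝ => (1 + δ)⁻¹ * L) atTop) := h4.symm
        _ ≤ Filter.map (fun L : ℝ => (1 + δ) * L) atTop := Filter.map_mono hmapto'
    have hliminf_comp : liminf (fun L : ℝ => F ((1 + δ) * L)) atTop = B := by
      rw [hB]
      conv_rhs => rw [← hmap]
      rw [Filter.liminf, Filter.liminf, Filter.map_map]
      rfl
    -- (1+δ)^(-n) * h L ≤ F ((1+δ)L)
    have hev : ∀ᶠ L in atTop, (1 + δ) ^ (-n) * h L ≤ F ((1 + δ) * L) := by
      filter_upwards [hhF] with L hL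
      have h2 := mul_le_mul_of_nonneg_left hL (Real.rpow_nonneg hδ1.le (-n))
      calc (1 + δ) ^ (-n) * h L ≤ (1 + δ) ^ (-n) * ((1 + δ) ^ n * F ((1 + δ) * L)) := h2
        _ = F ((1 + δ) * L) := by
            rw [← mul_assoc, ← Real.rpow_add hδ1]
            simp
    have htend2 : Tendsto (fun L => (1 + δ) ^ (-n) * h L) atTop (nhds ((1 + δ) ^ (-n) * I)) :=
      hth.const_mul _
    obtain ⟨b, hb⟩ := hbddA
    have hFcomp_bdd : IsBoundedUnder (· ≤ ·) atTop (fun L : ℝ => F ((1 + δ) * L)) :=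
      ⟨b, eventually_map.2 (hmapto.eventually (eventually_map.1 hb))⟩
    have h3 : (1 + δ) ^ (-n) * I ≤ B := by
      rw [← hliminf_comp, ← htend2.liminf_eq]
      exact liminf_le_liminf hev htend2.isBoundedUnder_ge hFcomp_bdd.isCoboundedUnder_ge
    calc (1 + δ) ^ (-n) * c ≤ (1 + δ) ^ (-n) * I :=
          mul_le_mul_of_nonneg_left hcI (Real.rpow_nonneg hδ1.le _)
      _ ≤ B := h3
  -- A ≤ c via continuity from above
  have hAc : A ≤ c := by
    set s : ℕ → Set (Fin M → ℝ) := fun k => {x : Fin M → ℝ | φ x ≤ 1 + 1 / (k + 1)} with hs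
    have hsm : ∀ k, NullMeasurableSet (s k) ν := fun k =>
      ((isClosed_le hφc continuous_const).measurableSet).nullMeasurableSet
    have hsmono : Antitone s := by
      intro k l hkl x hx
      simp only [hs, mem_setOf_eq] at hx ⊢
      have : (1 : ℝ) / (l + 1) ≤ 1 / (k + 1) := by
        apply one_div_le_one_div_of_le
        · positivity
        · exact_mod_cast by omega
      linarith
    have hsint : (⋂ k, s k) = {x : Fin M → ℝ | φ x ≤ 1} := by
      ext x
      simp only [mem_iInter, hs, mem_setOf_eq]
      constructor
      · intro hx
        by_contra h
        push_neg at h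
        obtain ⟨k, hk⟩ := exists_nat_one_div_lt (show (0:ℝ) < φ x - 1 by linarith)
        have := hx k
        linarith
      · intro hx k
        have : (0:ℝ) < 1 / (k + 1) := by positivity
        linarith
    have htend : Tendsto (fun k => ν (s k)) atTop (nhds (ν {x : Fin M → ℝ | φ x ≤ 1})) := by
      have := tendsto_measure_iInter_atTop (μ := ν) hsm hsmono ⟨0, (hfin _ (hK _)).ne⟩
      rwa [hsint] at this
    have htendR : Tendsto (fun k => (ν (s k)).toReal) atTop (nhds c) :=
      (ENNReal.tendsto_toReal hν1).comp htend
    apply ge_of_tendsto htendR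
    filter_upwards with k
    exact hAle _ (by positivity)
  -- c ≤ B
  have hcB : c ≤ B := by
    have htend : Tendsto (fun k : ℕ => ((1:ℝ) + 1 / (k + 1)) ^ (-n) * c) atTop (nhds c) := by
      have h1 : Tendsto (fun k : ℕ => (1:ℝ) + 1 / (k + 1)) atTop (nhds 1) := by
        have := tendsto_one_div_add_atTop_nhds_zero_nat (𝕜 := ℝ)
        have h2 := this.const_add (1:ℝ)
        simpa using h2
      have h2 : ContinuousAt (fun x : ℝ => x ^ (-n)) 1 :=
        Real.continuousAt_rpow_const 1 (-n) (Or.inl one_ne_zero)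
      have h3 : Tendsto (fun k : ℕ => ((1:ℝ) + 1 / (k + 1)) ^ (-n)) atTop (nhds (1 ^ (-n) : ℝ)) :=
        h2.tendsto.comp h1
      rw [Real.one_rpow] at h3
      simpa using h3.mul_const c
    apply le_of_tendsto htend
    filter_upwards with k
    exact hBge _ (by positivity)
  have hBA : B ≤ A := liminf_le_limsup hbddA hbddB
  have hAeq : A = c := le_antisymm hAc (le_trans hcB hBA)
  have hBeq : B = c := le_antisymm (hBA.trans hAc) hcB
  exact tendsto_of_liminf_eq_limsup hBeq hAeq hbddA hbddB
end

section
/- Let S ⊆ ℝ^M be a set whose intersection with every compact set is finite, let n > 0 be a real number, and let ν be a Borel measure on ℝ^M, finite on compact sets, such that the rescaled counting measures of S converge vaguely with order n to ν. Let F : ℝ^M → ℝ^j be continuous with F(t·x) = t·F(x) for all t ≥ 0 and F(x) ≠ 0 for every x ≠ 0. Set c := ν({x ∈ ℝ^M : ‖F(x)‖₁ ≤ 1}), where ‖y‖₁ = |y_1| + … + |y_j|, and assume c > 0. Then for every continuous compactly supported f : ℝ^j → ℝ one has lim_{L→∞} (1/|{x ∈ S : ‖F(x)‖₁ ≤ L}|)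 · Σ_{x∈S} f(L^{−1}·F(x)) = (1/c) · ∫_{ℝ^M} f(F(x)) dν(x), the limit being taken over real L → ∞ (all the relevant sets are finite and all the sums have only finitely many nonzero terms). -/
open MeasureTheory Set Filter
open scoped Pointwise ENNReal BigOperators

section helpers
variable {M j : ℕ} {F : (Fin M → ℝ) → (Fin j → ℝ)}

lemma sumAbs_smul' (hFh : ∀ t : ℝ, 0 ≤ t → ∀ x : Fin M → ℝ, F (t • x) = t • F x)
    {t : ℝ} (ht : 0 ≤ t) (x : Fin M → ℝ) :
    ∑ i, |F (t • x) i| = t * ∑ i, |F x i| := by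
  rw [hFh t ht x, Finset.mul_sum]
  refine Finset.sum_congr rfl fun i _ => ?_
  simp [Pi.smul_apply, smul_eq_mul, abs_mul, abs_of_nonneg ht]

lemma exists_pos_lowerBound (hFc : Continuous F)
    (hFh : ∀ t : ℝ, 0 ≤ t → ∀ x : Fin M → ℝ, F (t • x) = t • F x)
    (hFp : ∀ x : Fin M → ℝ, x ≠ 0 → F x ≠ 0) :
    ∃ m : ℝ, 0 < m ∧ ∀ x : Fin M → ℝ, m * ‖x‖ ≤ ∑ i, |F x i| := by
  have hF0 : F 0 = 0 := by simpa using hFh 0 le_rfl 0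
  have hpos : ∀ x : Fin M → ℝ, x ≠ 0 → 0 < ∑ i, |F x i| := by
    intro x hx
    obtain ⟨i, hi⟩ := Function.ne_iff.1 (hFp x hx)
    exact Finset.sum_pos' (fun i _ => abs_nonneg _) ⟨i, Finset.mem_univ i, abs_pos.2 hi⟩
  by_cases hsp : (Metric.sphere (0 : Fin M → ℝ) 1).Nonempty
  · have hcont : Continuous fun x : Fin M → ℝ => ∑ i, |F x i| := by
      exact continuous_finset_sum _ fun i _ => (continuous_abs.comp ((continuous_apply i).comp hFc))
    obtain ⟨x₀, hx₀, hmin⟩ := (isCompact_sphere (0 : Fin M → ℝ) 1).exists_isMinOn hsp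
      hcont.continuousOn
    have hx₀n : ‖x₀‖ = 1 := by simpa using mem_sphere_zero_iff_norm.1 hx₀
    have hx₀0 : x₀ ≠ 0 := by intro h; rw [h] at hx₀n; simp at hx₀n
    refine ⟨∑ i, |F x₀ i|, hpos x₀ hx₀0, fun x => ?_⟩
    rcases eq_or_ne x 0 with rfl | hx
    · simp [hF0]
    · have hnx : 0 < ‖x‖ := norm_pos_iff.2 hx
      have hu : (‖x‖⁻¹ • x) ∈ Metric.sphere (0 : Fin M → ℝ) 1 := by
        simp [mem_sphere_zero_iff_norm, norm_smul, abs_of_nonneg (inv_nonneg.2 hnx.le),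
          inv_mul_cancel₀ hnx.ne']
      have h1 : ∑ i, |F x₀ i| ≤ ∑ i, |F (‖x‖⁻¹ • x) i| := hmin hu
      have h2 : ∑ i, |F (‖x‖⁻¹ • x) i| = ‖x‖⁻¹ * ∑ i, |F x i| :=
        sumAbs_smul' hFh (inv_nonneg.2 hnx.le) x
      rw [h2] at h1
      calc (∑ i, |F x₀ i|) * ‖x‖ ≤ (‖x‖⁻¹ * ∑ i, |F x i|) * ‖x‖ := by
            exact mul_le_mul_of_nonneg_right h1 hnx.le
        _ = ∑ i, |F x i| := by field_simp
  · refine ⟨1, one_pos, fun x => ?_⟩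
    have hx : x = 0 := by
      by_contra hx
      have hnx : 0 < ‖x‖ := norm_pos_iff.2 hx
      exact hsp ⟨‖x‖⁻¹ • x, by
        simp [mem_sphere_zero_iff_norm, norm_smul, abs_of_nonneg (inv_nonneg.2 hnx.le),
          inv_mul_cancel₀ hnx.ne']⟩
    simp [hx, hF0]

lemma isCompact_sublevel (hFc : Continuous F) {m : ℝ} (hm : 0 < m)
    (hmb : ∀ x : Fin M → ℝ, m * ‖x‖ ≤ ∑ i, |F x i|) (r : ℝ) :
    IsCompact {x : Fin M → ℝ | ∑ i, |F x i| ≤ r} := by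
  have hcont : Continuous fun x : Fin M → ℝ => ∑ i, |F x i| :=
    continuous_finset_sum _ fun i _ => (continuous_abs.comp ((continuous_apply i).comp hFc))
  have hclosed : IsClosed {x : Fin M → ℝ | ∑ i, |F x i| ≤ r} :=
    isClosed_le hcont continuous_const
  have hbdd : {x : Fin M → ℝ | ∑ i, |F x i| ≤ r} ⊆ Metric.closedBall 0 (|r| / m) := by
    intro x hx
    simp only [Metric.mem_closedBall, dist_zero_right]
    rw [le_div_iff₀ hm, mul_comm]
    exact le_trans (le_trans (hmb x) hx) (le_abs_self r)
  exact Metric.isCompact_of_isClosed_isBounded hclosed (Metric.isBounded_closedBall.subset hbdd)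

end helpers

lemma integral_comp_smul_eq {M : ℕ} {S : Set (Fin M → ℝ)} {n : ℝ} {ν : Measure (Fin M → ℝ)}
    (hvague : VagueLimit S n ν) {u : ℝ} (hu : 0 < u)
    (h : (Fin M → ℝ) → ℝ) (hhc : Continuous h) (hhs : HasCompactSupport h) :
    ∫ x, h (u • x) ∂ν = u ^ (-n) * ∫ x, h x ∂ν := by
  have hgc : Continuous fun x : Fin M → ℝ => h (u • x) := hhc.comp (continuous_const_smul u)
  have hgs : HasCompactSupport fun x : Fin M → ℝ => h (u • x) := hhs.comp_smul hu.ne'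
  have l1 := hvague _ hgc hgs
  have hdiv : Tendsto (fun L : ℝ => L / u) atTop atTop := tendsto_id.atTop_div_const hu
  have l2 : Tendsto (fun L : ℝ => u ^ (-n) * ((L / u) ^ (-n) * ∑ᶠ x ∈ S, h ((L / u)⁻¹ • x)))
      atTop (nhds (u ^ (-n) * ∫ x, h x ∂ν)) :=
    ((hvague h hhc hhs).comp hdiv).const_mul _
  have hEq : (fun L : ℝ => L ^ (-n) * ∑ᶠ x ∈ S, h (u • L⁻¹ • x)) =ᶠ[atTop]
      fun L : ℝ => u ^ (-n) * ((L / u) ^ (-n) * ∑ᶠ x ∈ S, h ((L / u)⁻¹ • x)) := by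
    filter_upwards [eventually_gt_atTop (0 : ℝ)] with L hL
    have e1 : ∀ x : Fin M → ℝ, u • L⁻¹ • x = (L / u)⁻¹ • x := by
      intro x
      rw [smul_smul, inv_div, div_eq_mul_inv]
    have e2 : L ^ (-n) = u ^ (-n) * (L / u) ^ (-n) := by
      rw [← Real.mul_rpow hu.le (div_nonneg hL.le hu.le)]
      congr 1
      field_simp
    simp only [e1, e2, mul_assoc]
  exact tendsto_nhds_unique (l1.congr' hEq) l2

/-- Let `S ⊆ ℝ^M` intersect every compact set in a finite set, let
`n > 0` be real, and let `ν` be a Borel measure on `ℝ^M`, finite on compact sets, such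
that the rescaled counting measures of `S` converge vaguely with order `n` to `ν`.
Let `F : ℝ^M → ℝ^j` be continuous with `F (t • x) = t • F x` for `t ≥ 0` and `F x ≠ 0`
for `x ≠ 0`.  Set `c := ν {x | ‖F x‖₁ ≤ 1}` (with `‖y‖₁ = ∑ |y i|`) and assume `c > 0`.
Then for every continuous compactly supported `f : ℝ^j → ℝ`,
`lim_{L→∞} (1/|{x ∈ S | ‖F x‖₁ ≤ L}|) · ∑_{x ∈ S} f (L⁻¹ • F x) = (1/c) ∫ f ∘ F dν`. -/
theorem stmt11 (M j : ℕ) (S : Set (Fin M → ℝ))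
    (hS : ∀ K : Set (Fin M → ℝ), IsCompact K → (S ∩ K).Finite)
    (n : ℝ) (hn : 0 < n) (ν : Measure (Fin M → ℝ))
    (hfin : ∀ K : Set (Fin M → ℝ), IsCompact K → ν K < ⊤)
    (hvague : VagueLimit S n ν)
    (F : (Fin M → ℝ) → (Fin j → ℝ)) (hFc : Continuous F)
    (hFh : ∀ t : ℝ, 0 ≤ t → ∀ x : Fin M → ℝ, F (t • x) = t • F x)
    (hFp : ∀ x : Fin M → ℝ, x ≠ 0 → F x ≠ 0)
    (hc : 0 < ν {x : Fin M → ℝ | ∑ i, |F x i| ≤ 1}) :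
    ∀ f : (Fin j → ℝ) → ℝ, Continuous f → HasCompactSupport f →
      Tendsto
        (fun L : ℝ =>
          (1 / ({x ∈ S | ∑ i, |F x i| ≤ L}.ncard : ℝ)) * ∑ᶠ x ∈ S, f (L⁻¹ • F x))
        atTop
        (nhds ((1 / (ν {x : Fin M → ℝ | ∑ i, |F x i| ≤ 1}).toReal) *
          ∫ x, f (F x) ∂ν)) := by
  intro f hf hfsupp
  classical
  obtain ⟨m, hm, hmb⟩ := exists_pos_lowerBound hFc hFh hFp
  have hAc : ∀ r : ℝ, IsCompact {x : Fin M → ℝ | ∑ i, |F x i| ≤ r} :=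
    isCompact_sublevel hFc hm hmb
  have hsum_cont : Continuous fun x : Fin M → ℝ => ∑ i, |F x i| :=
    continuous_finset_sum _ fun i _ => (continuous_abs.comp ((continuous_apply i).comp hFc))
  have hAm : MeasurableSet {x : Fin M → ℝ | ∑ i, |F x i| ≤ 1} :=
    (isClosed_le hsum_cont continuous_const).measurableSet
  haveI : IsFiniteMeasureOnCompacts ν := ⟨fun {K} hK => hfin K hK⟩
  set φ : ℝ := (ν {x : Fin M → ℝ | ∑ i, |F x i| ≤ 1}).toReal with hφdef
  have hφ : 0 < φ := ENNReal.toReal_pos hc.ne' (hfin _ (hAc 1)).ne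
  set N : ℝ → ℝ := fun L => (({x ∈ S | ∑ i, |F x i| ≤ L} : Set (Fin M → ℝ)).ncard : ℝ)
    with hNdef
  have hSfin : ∀ L : ℝ, ({x ∈ S | ∑ i, |F x i| ≤ L} : Set (Fin M → ℝ)).Finite :=
    fun L => hS _ (hAc L)
  -- key sandwich construction for u > 1
  have key : ∀ u : ℝ, 1 < u → ∃ g h : (Fin M → ℝ) → ℝ,
      Continuous g ∧ HasCompactSupport g ∧ Continuous h ∧ HasCompactSupport h ∧
      u ^ (-n) * φ ≤ (∫ x, g x ∂ν) ∧ (∫ x, h x ∂ν) ≤ (u ^ (-n))⁻¹ * φ ∧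
      (∀ L : ℝ, 0 < L →
        (∑ᶠ x ∈ S, g (L⁻¹ • x)) ≤ N L ∧ N L ≤ ∑ᶠ x ∈ S, h (L⁻¹ • x)) := by
    intro u hu
    have hu0 : (0 : ℝ) < u := lt_trans one_pos hu
    have htcl : IsClosed {x : Fin M → ℝ | u ≤ ∑ i, |F x i|} :=
      isClosed_le continuous_const hsum_cont
    have hdisj : Disjoint {x : Fin M → ℝ | ∑ i, |F x i| ≤ 1}
        {x : Fin M → ℝ | u ≤ ∑ i, |F x i|} := by
      rw [Set.disjoint_left]
      intro x hx1 hxu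
      simp only [mem_setOf_eq] at hx1 hxu
      linarith
    obtain ⟨h, h_one, h_zero, hhs, hicc⟩ :=
      exists_continuous_one_zero_of_isCompact (hAc 1) htcl hdisj
    set g : (Fin M → ℝ) → ℝ := fun x => h (u • x) with hgdef
    have hgc : Continuous g := h.continuous.comp (continuous_const_smul u)
    have hgs : HasCompactSupport g := hhs.comp_smul hu0.ne'
    have hune : (u : ℝ) ^ (-n) ≠ 0 := (Real.rpow_pos_of_pos hu0 _).ne'
    -- pointwise comparisons
    have hgle : ∀ x : Fin M → ℝ,
        g x ≤ ({x : Fin M → ℝ | ∑ i, |F x i| ≤ 1}).indicator (fun _ => (1 : ℝ)) x := by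
      intro x
      by_cases hx : ∑ i, |F x i| ≤ 1
      · rw [Set.indicator_of_mem (show x ∈ {y : Fin M → ℝ | ∑ i, |F y i| ≤ 1} from hx)]
        exact (hicc _).2
      · rw [Set.indicator_of_notMem (show x ∉ {y : Fin M → ℝ | ∑ i, |F y i| ≤ 1} from hx)]
        have hxu : u ≤ ∑ i, |F (u • x) i| := by
          rw [sumAbs_smul' hFh hu0.le]
          nlinarith [not_le.1 hx]
        have : g x = 0 := h_zero hxu
        exact le_of_eq this
    have hhge : ∀ x : Fin M → ℝ,
        ({x : Fin M → ℝ | ∑ i, |F x i| ≤ 1}).indicator (fun _ => (1 : ℝ)) x ≤ h x := by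
      intro x
      by_cases hx : ∑ i, |F x i| ≤ 1
      · rw [Set.indicator_of_mem (show x ∈ {y : Fin M → ℝ | ∑ i, |F y i| ≤ 1} from hx)]
        exact le_of_eq (h_one hx).symm
      · rw [Set.indicator_of_notMem (show x ∉ {y : Fin M → ℝ | ∑ i, |F y i| ≤ 1} from hx)]
        exact (hicc _).1
    have hInd : Integrable (({x : Fin M → ℝ | ∑ i, |F x i| ≤ 1}).indicator
        (fun _ => (1 : ℝ))) ν :=
      (integrable_indicator_iff hAm).2 (integrableOn_const (hfin _ (hAc 1)).ne)
    have hIh : Integrable (⇑h) ν := h.continuous.integrable_of_hasCompactSupport hhs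
    have hIg : Integrable g ν := hgc.integrable_of_hasCompactSupport hgs
    have hIndval : ∫ x, ({x : Fin M → ℝ | ∑ i, |F x i| ≤ 1}).indicator
        (fun _ => (1 : ℝ)) x ∂ν = φ := by
      rw [hφdef]
      exact integral_indicator_one hAm
    have hscale : ∫ x, g x ∂ν = u ^ (-n) * ∫ x, h x ∂ν :=
      integral_comp_smul_eq hvague hu0 h h.continuous hhs
    have hφleh : φ ≤ ∫ x, h x ∂ν := by
      rw [← hIndval]
      exact integral_mono hInd hIh hhge
    have hgleφ : (∫ x, g x ∂ν) ≤ φ := by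
      rw [← hIndval]
      exact integral_mono hIg hInd hgle
    refine ⟨g, h, hgc, hgs, h.continuous, hhs, ?_, ?_, ?_⟩
    · rw [hscale]
      exact mul_le_mul_of_nonneg_left hφleh (Real.rpow_nonneg hu0.le _)
    · have h2 : ∫ x, h x ∂ν = (u ^ (-n))⁻¹ * ∫ x, g x ∂ν := by
        rw [hscale, inv_mul_cancel_left₀ hune]
      rw [h2]
      exact mul_le_mul_of_nonneg_left hgleφ (inv_nonneg.2 (Real.rpow_nonneg hu0.le _))
    · intro L hL
      have hLinv : (0 : ℝ) ≤ L⁻¹ := inv_nonneg.2 hL.le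
      set T : Set (Fin M → ℝ) := {x ∈ S | ∑ i, |F x i| ≤ L} with hTdef
      have hTfin : T.Finite := hSfin L
      -- membership: on T, h (L⁻¹ • x) = 1
      have hmem1 : ∀ x ∈ T, h (L⁻¹ • x) = 1 := by
        intro x hx
        refine h_one ?_
        have : ∑ i, |F (L⁻¹ • x) i| = L⁻¹ * ∑ i, |F x i| := sumAbs_smul' hFh hLinv x
        simp only [mem_setOf_eq, this]
        rw [inv_mul_le_iff₀ hL, mul_one]
        exact hx.2
      constructor
      · -- lower: finsum of g ≤ N L
        have hgsub : S ∩ Function.support (fun x => g (L⁻¹ • x)) ⊆ T := by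
          rintro x ⟨hxS, hxsupp⟩
          refine ⟨hxS, ?_⟩
          by_contra hxL
          have hind : ({x : Fin M → ℝ | ∑ i, |F x i| ≤ 1}).indicator
              (fun _ => (1 : ℝ)) (L⁻¹ • x) = 0 := by
            refine Set.indicator_of_notMem ?_ _
            simp only [mem_setOf_eq, sumAbs_smul' hFh hLinv]
            rw [inv_mul_le_iff₀ hL, mul_one]
            exact hxL
          have h0' : g (L⁻¹ • x) ≤ 0 := by
            have := hgle (L⁻¹ • x); rw [hind] at this; exact this
          have h1' : 0 ≤ g (L⁻¹ • x) := (hicc _).1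
          exact hxsupp (le_antisymm h0' h1')
        have hsupfing : (S ∩ Function.support fun x => g (L⁻¹ • x)).Finite :=
          hTfin.subset hgsub
        rw [finsum_mem_eq_sum _ hsupfing]
        have hsub2 : hsupfing.toFinset ⊆ hTfin.toFinset := by
          intro x hx
          rw [Set.Finite.mem_toFinset] at *
          exact hgsub hx
        calc (∑ x ∈ hsupfing.toFinset, g (L⁻¹ • x))
            ≤ ∑ _x ∈ hsupfing.toFinset, (1 : ℝ) :=
              Finset.sum_le_sum fun x _ => (hicc _).2
          _ = (hsupfing.toFinset.card : ℝ) := by simp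
          _ ≤ (hTfin.toFinset.card : ℝ) := by
              exact_mod_cast Finset.card_le_card hsub2
          _ = N L := by
              rw [show N L = (T.ncard : ℝ) from rfl, Set.ncard_eq_toFinset_card _ hTfin]
      · -- upper: N L ≤ finsum of h
        have hhsub : S ∩ Function.support (fun x => h (L⁻¹ • x)) ⊆
            S ∩ (L • tsupport (⇑h)) := by
          rintro x ⟨hxS, hxsupp⟩
          exact ⟨hxS, ⟨L⁻¹ • x, subset_tsupport _ hxsupp, smul_inv_smul₀ hL.ne' x⟩⟩
        have hsupfinh : (S ∩ Function.support fun x => h (L⁻¹ • x)).Finite :=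
          (hS _ (IsCompact.smul L hhs)).subset hhsub
        rw [finsum_mem_eq_sum _ hsupfinh]
        have hsub1 : hTfin.toFinset ⊆ hsupfinh.toFinset := by
          intro x hx
          rw [Set.Finite.mem_toFinset] at *
          refine ⟨hx.1, ?_⟩
          rw [Function.mem_support, hmem1 x hx]
          exact one_ne_zero
        calc N L = (hTfin.toFinset.card : ℝ) := by
              rw [show N L = (T.ncard : ℝ) from rfl, Set.ncard_eq_toFinset_card _ hTfin]
          _ = ∑ x ∈ hTfin.toFinset, (1 : ℝ) := by simp
          _ = ∑ x ∈ hTfin.toFinset, h (L⁻¹ • x) := by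
              refine Finset.sum_congr rfl fun x hx => ?_
              rw [Set.Finite.mem_toFinset] at hx
              exact (hmem1 x hx).symm
          _ ≤ ∑ x ∈ hsupfinh.toFinset, h (L⁻¹ • x) :=
              Finset.sum_le_sum_of_subset_of_nonneg hsub1 fun x _ _ => (hicc _).1
  -- the counting limit
  have hcount : Tendsto (fun L : ℝ => L ^ (-n) * N L) atTop (nhds φ) := by
    rw [tendsto_order]
    constructor
    · intro a ha
      have hcontu : Tendsto (fun u : ℝ => u ^ (-n) * φ) (nhdsWithin 1 (Ioi 1)) (nhds φ) := by
        have h1 : ContinuousAt (fun u : ℝ => u ^ (-n) * φ) 1 :=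
          (Real.continuousAt_rpow_const 1 (-n) (Or.inl one_ne_zero)).mul continuousAt_const
        have h2 := (h1.continuousWithinAt (s := Ioi 1)).tendsto
        simpa [Real.one_rpow] using h2
      obtain ⟨u, hau, hu1⟩ :=
        ((hcontu.eventually_const_lt ha).and self_mem_nhdsWithin).exists
      obtain ⟨g, h, hgc, hgs, hhc, hhs, hglower, _, hcnt⟩ := key u hu1
      have hg := hvague g hgc hgs
      have hev : ∀ᶠ L in atTop, a < L ^ (-n) * ∑ᶠ x ∈ S, g (L⁻¹ • x) :=
        hg.eventually_const_lt (lt_of_lt_of_le hau hglower)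
      filter_upwards [hev, eventually_gt_atTop (0 : ℝ)] with L h1 h2
      exact h1.trans_le (mul_le_mul_of_nonneg_left ((hcnt L h2).1) (Real.rpow_nonneg h2.le _))
    · intro a ha
      have hcontu : Tendsto (fun u : ℝ => (u ^ (-n))⁻¹ * φ) (nhdsWithin 1 (Ioi 1)) (nhds φ) := by
        have h1 : ContinuousAt (fun u : ℝ => (u ^ (-n))⁻¹ * φ) 1 := by
          refine ContinuousAt.mul (ContinuousAt.inv₀ ?_ ?_) continuousAt_const
          · exact Real.continuousAt_rpow_const 1 (-n) (Or.inl one_ne_zero)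
          · simp [Real.one_rpow]
        have h2 := (h1.continuousWithinAt (s := Ioi 1)).tendsto
        simpa [Real.one_rpow] using h2
      obtain ⟨u, hau, hu1⟩ :=
        ((hcontu.eventually_lt_const ha).and self_mem_nhdsWithin).exists
      obtain ⟨g, h, hgc, hgs, hhc, hhs, _, hhupper, hcnt⟩ := key u hu1
      have hg := hvague h hhc hhs
      have hev : ∀ᶠ L in atTop, L ^ (-n) * ∑ᶠ x ∈ S, h (L⁻¹ • x) < a :=
        hg.eventually_lt_const (lt_of_le_of_lt hhupper hau)
      filter_upwards [hev, eventually_gt_atTop (0 : ℝ)] with L h1 h2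
      exact lt_of_le_of_lt
        (mul_le_mul_of_nonneg_left ((hcnt L h2).2) (Real.rpow_nonneg h2.le _)) h1
  -- compact support of f ∘ F
  have hfF : HasCompactSupport fun x : Fin M → ℝ => f (F x) := by
    obtain ⟨R, hR⟩ := (hfsupp.isBounded).subset_closedBall 0
    refine HasCompactSupport.intro (isCompact_closedBall (0 : Fin M → ℝ) ((j * R) / m)) ?_
    intro x hx
    by_contra hfx
    have hFx : F x ∈ tsupport f := subset_tsupport f (Function.mem_support.2 hfx)
    have hFxR : ‖F x‖ ≤ R := by
      have := hR hFx
      simpa [mem_closedBall_zero_iff] using this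
    have h1 : ∑ i, |F x i| ≤ (j : ℝ) * R :=
      calc ∑ i, |F x i| ≤ ∑ _i : Fin j, ‖F x‖ :=
            Finset.sum_le_sum fun i _ => by
              simpa [Real.norm_eq_abs] using norm_le_pi_norm (F x) i
        _ = (j : ℝ) * ‖F x‖ := by simp [mul_comm]
        _ ≤ (j : ℝ) * R := mul_le_mul_of_nonneg_left hFxR (Nat.cast_nonneg j)
    have h2 : ‖x‖ ≤ (j : ℝ) * R / m := by
      rw [le_div_iff₀ hm, mul_comm]
      exact le_trans (hmb x) h1
    exact hx (by simpa [mem_closedBall_zero_iff] using h2)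
  have hvF := hvague _ (hf.comp hFc) hfF
  have hmain : Tendsto
      (fun L : ℝ => (L ^ (-n) * ∑ᶠ x ∈ S, f (F (L⁻¹ • x))) / (L ^ (-n) * N L)) atTop
      (nhds ((∫ x, f (F x) ∂ν) / φ)) :=
    hvF.div hcount hφ.ne'
  have hfinal : (1 / φ) * ∫ x, f (F x) ∂ν = (∫ x, f (F x) ∂ν) / φ := by
    rw [one_div, inv_mul_eq_div]
  rw [hfinal]
  refine Tendsto.congr' ?_ hmain
  filter_upwards [eventually_gt_atTop (0 : ℝ),
    hcount.eventually_const_lt (half_lt_self hφ)] with L hL hNL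
  have hLp : 0 < L ^ (-n) := Real.rpow_pos_of_pos hL _
  have hNpos : 0 < N L := by
    by_contra hcon
    push_neg at hcon
    have : L ^ (-n) * N L ≤ 0 := mul_nonpos_of_nonneg_of_nonpos hLp.le hcon
    linarith [half_pos hφ]
  have hsum : ∑ᶠ x ∈ S, f (F (L⁻¹ • x)) = ∑ᶠ x ∈ S, f (L⁻¹ • F x) :=
    finsum_mem_congr rfl fun x _ => by rw [hFh L⁻¹ (inv_nonneg.2 hL.le) x]
  rw [hsum]
  field_simp
  exact (mul_inv_cancel_right₀ hNpos.ne' _).symm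
end
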